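/- arXiv:1508.02780 — 8 statements merged into one kernel-verified Lean document; each statement's English description precedes it below -/
import Mathlib

section
/- Let A be a commutative ring and L an A-module equipped with an A-bilinear 'connection' ∇ : L × L → L satisfying ∇_{aX}Y = a∇_X Y. Define recursively maps E_n : L^n → U into a filtered associative algebra U containing A and L (e.g. the universal enveloping algebra of a Lie–Rinehart algebra), by E_0 = inclusion of A, E_1 = inclusion of L, and E_n(X_1,…,X_n) = (1/n)·[ Σ_k X_k · E_{n-1}(X_1,…,X̂_k,…,X_n) − Σ_{l<k} E_{n-1}(X_1,…,∇_{X_k}X_l,…,X̂_k,…,X_n) − Σ_{k<l} E_{n-1}(X_1,…,X̂_k,…,∇_{X_k}X_l,…,X_n) ]. Then each E_n is A-multilinear in all arguments. -/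
/-! STATEMENT 0: the recursively defined maps `E_n` into a filtered associative
algebra `U` containing `A` and `L` are `A`-multilinear. -/

noncomputable section

/-- The recursively defined maps `E_n : L^n → U`, with `E_0 = 1` (the inclusion of
`A` applied to `1`), `E_1 = j` (the inclusion of `L`), and
`E_n(X_1,…,X_n) = (1/n)·[ Σ_k X_k · E_{n-1}(…,X̂_k,…) − Σ_{l≠k} E_{n-1}(…,∇_{X_k}X_l,…,X̂_k,…) ]`. -/
def EMap {L U : Type*} [Ring U] [Algebra ℚ U] (j : L → U) (nab : L → L → L) :
    (n : ℕ) → (Fin n → L) → U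
  | 0, _ => 1
  | (n + 1), X =>
      (((n : ℚ) + 1)⁻¹) •
        ((∑ k : Fin (n + 1), j (X k) * EMap j nab n (X ∘ k.succAbove)) -
          ∑ k : Fin (n + 1), ∑ m : Fin n,
            EMap j nab n
              (Function.update (X ∘ k.succAbove) m (nab (X k) (X (k.succAbove m)))))

namespace EMapAux

variable {L U : Type*} [Ring U] [Algebra ℚ U] {n : ℕ}

lemma comp_self (X : Fin (n+1) → L) (k : Fin (n+1)) (v : L) :
    Function.update X k v ∘ k.succAbove = X ∘ k.succAbove := by
  funext m
  exact Function.update_of_ne (Fin.succAbove_ne k m) v X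

lemma comp_ne (X : Fin (n+1) → L) {k k' : Fin (n+1)} {m₀ : Fin n}
    (h : k'.succAbove m₀ = k) (v : L) :
    Function.update X k v ∘ k'.succAbove = Function.update (X ∘ k'.succAbove) m₀ v := by
  funext m
  by_cases hm : m = m₀
  · subst hm
    rw [Function.comp_apply, h, Function.update_self, Function.update_self]
  · have hne : k'.succAbove m ≠ k := fun hc =>
      hm (Fin.succAbove_right_injective (hc.trans h.symm))
    rw [Function.comp_apply, Function.update_of_ne hne, Function.update_of_ne hm]
    rfl

def Gterm (j : L → U) (nab : L → L → L) (X : Fin (n+1) → L) (k' : Fin (n+1)) : U :=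
  j (X k') * EMap j nab n (X ∘ k'.succAbove) -
    ∑ m : Fin n, EMap j nab n
      (Function.update (X ∘ k'.succAbove) m (nab (X k') (X (k'.succAbove m))))

lemma EMap_succ (j : L → U) (nab : L → L → L) (X : Fin (n+1) → L) :
    EMap j nab (n+1) X = (((n : ℚ) + 1)⁻¹) • ∑ k' : Fin (n+1), Gterm j nab X k' := by
  simp only [EMap, Gterm, Finset.sum_sub_distrib]

lemma Gterm_update_self (j : L → U) (nab : L → L → L) (X : Fin (n+1) → L)
    (k : Fin (n+1)) (W : L) :
    Gterm j nab (Function.update X k W) k =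
      j W * EMap j nab n (X ∘ k.succAbove) -
        ∑ m : Fin n, EMap j nab n
          (Function.update (X ∘ k.succAbove) m (nab W (X (k.succAbove m)))) := by
  unfold Gterm
  rw [comp_self, Function.update_self]
  congr 1
  refine Finset.sum_congr rfl fun m _ => ?_
  rw [Function.update_of_ne (Fin.succAbove_ne k m)]

lemma Gterm_update_ne (j : L → U) (nab : L → L → L) (X : Fin (n+1) → L)
    {k k' : Fin (n+1)} {m₀ : Fin n} (hk : k' ≠ k) (h : k'.succAbove m₀ = k) (W : L) :
    Gterm j nab (Function.update X k W) k' =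
      j (X k') * EMap j nab n (Function.update (X ∘ k'.succAbove) m₀ W) -
        (EMap j nab n (Function.update (X ∘ k'.succAbove) m₀ (nab (X k') W)) +
          ∑ m ∈ Finset.univ.erase m₀,
            EMap j nab n
              (Function.update
                (Function.update (X ∘ k'.succAbove) m (nab (X k') ((X ∘ k'.succAbove) m)))
                m₀ W)) := by
  unfold Gterm
  have hb : Function.update X k W ∘ k'.succAbove = Function.update (X ∘ k'.succAbove) m₀ W :=
    comp_ne X h W
  have hpt : ∀ m : Fin n, Function.update X k W (k'.succAbove m)
      = Function.update (X ∘ k'.succAbove) m₀ W m := fun m => congrFun hb m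
  rw [hb, Function.update_of_ne hk]
  congr 1
  rw [← Finset.add_sum_erase _ _ (Finset.mem_univ m₀)]
  congr 1
  · rw [hpt m₀, Function.update_self, Function.update_idem]
  · refine Finset.sum_congr rfl fun m hm => ?_
    have hmne : m ≠ m₀ := (Finset.mem_erase.mp hm).1
    rw [hpt m, Function.update_of_ne hmne, Function.update_comm hmne.symm]

end EMapAux

open EMapAux in
/-- Each `E_n` is `A`-multilinear (additive and `A`-homogeneous in every slot),
where `U` is viewed as a left `A`-module via left multiplication by `ι a`. -/
theorem EMap_multilinear
    {A L U : Type*} [CommRing A] [Algebra ℚ A]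
    [AddCommGroup L] [Module A L] [Ring U] [Algebra ℚ U]
    (ι : A →+* U) (j : L → U) (ρ : L → A → A) (nab : L → L → L)
    -- `j : L → U` is the `A`-linear inclusion of `L` into `U`
    (hj_add : ∀ X Y : L, j (X + Y) = j X + j Y)
    (hj_smul : ∀ (a : A) (X : L), j (a • X) = ι a * j X)
    -- the anchor `ρ` takes values in derivations of `A` and is `A`-linear
    (hρ_add : ∀ (X Y : L) (a : A), ρ (X + Y) a = ρ X a + ρ Y a)
    (hρ_smul : ∀ (a : A) (X : L) (b : A), ρ (a • X) b = a * ρ X b)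
    (hρ_der : ∀ (X : L) (a b : A), ρ X (a * b) = a * ρ X b + b * ρ X a)
    -- the commutation relation `X · a = a · X + ρ(X)(a)` in `U`
    (hcomm : ∀ (X : L) (a : A), j X * ι a = ι a * j X + ι (ρ X a))
    -- `∇` is a connection on `L`
    (hnab_add₁ : ∀ X Y Z : L, nab (X + Y) Z = nab X Z + nab Y Z)
    (hnab_add₂ : ∀ X Y Z : L, nab X (Y + Z) = nab X Y + nab X Z)
    (hnab_smul₁ : ∀ (a : A) (X Y : L), nab (a • X) Y = a • nab X Y)
    (hnab_smul₂ : ∀ (a : A) (X Y : L), nab X (a • Y) = ρ X a • Y + a • nab X Y)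
    (n : ℕ) (X : Fin n → L) (k : Fin n) :
    (∀ Y Z : L,
        EMap j nab n (Function.update X k (Y + Z)) =
          EMap j nab n (Function.update X k Y) + EMap j nab n (Function.update X k Z)) ∧
      (∀ (a : A) (Y : L),
        EMap j nab n (Function.update X k (a • Y)) =
          ι a * EMap j nab n (Function.update X k Y)) := by
  induction n with
  | zero => exact k.elim0
  | succ n ih =>
    have ihadd : ∀ (B : Fin n → L) (m : Fin n) (Y Z : L),
        EMap j nab n (Function.update B m (Y + Z)) =
          EMap j nab n (Function.update B m Y) + EMap j nab n (Function.update B m Z) :=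
      fun B m => (ih B m).1
    have ihsmul : ∀ (B : Fin n → L) (m : Fin n) (a : A) (Y : L),
        EMap j nab n (Function.update B m (a • Y)) =
          ι a * EMap j nab n (Function.update B m Y) :=
      fun B m => (ih B m).2
    constructor
    · intro Y Z
      rw [EMap_succ, EMap_succ, EMap_succ, ← smul_add, ← Finset.sum_add_distrib]
      congr 1
      refine Finset.sum_congr rfl fun k' _ => ?_
      by_cases hk : k' = k
      · subst hk
        rw [Gterm_update_self, Gterm_update_self, Gterm_update_self, hj_add]
        have hsum : ∀ m : Fin n,
            EMap j nab n (Function.update (X ∘ k'.succAbove) m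
              (nab (Y + Z) (X (k'.succAbove m)))) =
            EMap j nab n (Function.update (X ∘ k'.succAbove) m
              (nab Y (X (k'.succAbove m)))) +
            EMap j nab n (Function.update (X ∘ k'.succAbove) m
              (nab Z (X (k'.succAbove m)))) := fun m => by
          rw [hnab_add₁]; exact ihadd _ _ _ _
        rw [Finset.sum_congr rfl fun m _ => hsum m, Finset.sum_add_distrib, add_mul]
        abel
      · obtain ⟨m₀, hm₀⟩ := Fin.exists_succAbove_eq (Ne.symm hk)
        rw [Gterm_update_ne j nab X hk hm₀, Gterm_update_ne j nab X hk hm₀,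
          Gterm_update_ne j nab X hk hm₀, ihadd]
        rw [hnab_add₂, ihadd]
        rw [Finset.sum_congr rfl fun m hm => ihadd _ _ Y Z, Finset.sum_add_distrib, mul_add]
        abel
    · intro a Y
      rw [EMap_succ, EMap_succ, mul_smul_comm, Finset.mul_sum]
      congr 1
      refine Finset.sum_congr rfl fun k' _ => ?_
      by_cases hk : k' = k
      · subst hk
        rw [Gterm_update_self, Gterm_update_self, hj_smul]
        have hsum : ∀ m : Fin n,
            EMap j nab n (Function.update (X ∘ k'.succAbove) m
              (nab (a • Y) (X (k'.succAbove m)))) =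
            ι a * EMap j nab n (Function.update (X ∘ k'.succAbove) m
              (nab Y (X (k'.succAbove m)))) := fun m => by
          rw [hnab_smul₁]; exact ihsmul _ _ _ _
        rw [Finset.sum_congr rfl fun m _ => hsum m, ← Finset.mul_sum, mul_sub, ← mul_assoc]
      · obtain ⟨m₀, hm₀⟩ := Fin.exists_succAbove_eq (Ne.symm hk)
        rw [Gterm_update_ne j nab X hk hm₀, Gterm_update_ne j nab X hk hm₀, ihsmul]
        rw [hnab_smul₂, ihadd, ihsmul, ihsmul]
        rw [Finset.sum_congr rfl fun m hm => ihsmul _ _ a Y, ← Finset.mul_sum]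
        rw [← mul_assoc, hcomm]
        noncomm_ring

end
end

section
/- With E_n as above, the map E_n is symmetric in its arguments: for any permutation σ of {1,…,n}, E_n(X_{σ(1)},…,X_{σ(n)}) = E_n(X_1,…,X_n). Consequently the maps E_n descend to a well-defined A-module morphism pbw : S_A(L) → U(L) from the symmetric algebra of L over A to the universal enveloping algebra (the 'formal exponential map'). -/
/-! STATEMENT 1: the maps `E_n` are symmetric in their arguments; consequently
they descend to a well-defined `A`-module morphism `pbw : S_A(L) → U(L)`. -/

noncomputable section

/-- The symmetrizing relation on the tensor algebra. -/
inductive SymRel (A L : Type*) [CommRing A] [AddCommGroup L] [Module A L] :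
    TensorAlgebra A L → TensorAlgebra A L → Prop
  | mk (x y : L) :
      SymRel A L (TensorAlgebra.ι A x * TensorAlgebra.ι A y)
        (TensorAlgebra.ι A y * TensorAlgebra.ι A x)

/-- The symmetric algebra `S_A(L)` of the `A`-module `L`. -/
abbrev SymmAlgebra (A L : Type*) [CommRing A] [AddCommGroup L] [Module A L] :=
  RingQuot (SymRel A L)

/-- The canonical `A`-linear inclusion `L → S_A(L)`. -/
def ιSym (A L : Type*) [CommRing A] [AddCommGroup L] [Module A L] :
    L →ₗ[A] SymmAlgebra A L :=
  (RingQuot.mkAlgHom A (SymRel A L)).toLinearMap.comp (TensorAlgebra.ι A)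

/-- Symmetric monomial `X_1 ⊙ ⋯ ⊙ X_n` in `S_A(L)`. -/
def symMonomial (A : Type*) {L : Type*} [CommRing A] [AddCommGroup L] [Module A L]
    (n : ℕ) (X : Fin n → L) : SymmAlgebra A L :=
  (List.ofFn fun i => ιSym A L (X i)).prod

namespace EAux

set_option linter.unusedSectionVars false

section

/-- The permutation of `Fin n` induced by `σ` on the complement of `k`. -/
def permAux {n : ℕ} (σ : Equiv.Perm (Fin (n+1))) (k : Fin (n+1)) : Equiv.Perm (Fin n) :=
  (finSuccAboveEquiv k).trans
    ((σ.subtypeEquiv (q := fun b => b ≠ σ k)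
        (fun a => ⟨fun h hc => h (σ.injective hc), fun h hc => h (congrArg σ hc)⟩)).trans
      (finSuccAboveEquiv (σ k)).symm)

lemma permAux_spec {n : ℕ} (σ : Equiv.Perm (Fin (n+1))) (k : Fin (n+1)) (m : Fin n) :
    (σ k).succAbove (permAux σ k m) = σ (k.succAbove m) := by
  have h : permAux σ k m = (finSuccAboveEquiv (σ k)).symm
      ⟨σ (k.succAbove m), (Equiv.injective σ).ne_iff.2 (Fin.succAbove_ne k m)⟩ := by
    simp [permAux, Equiv.subtypeEquiv, finSuccAboveEquiv_apply]
  have h2 := (finSuccAboveEquiv (σ k)).apply_symm_apply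
      ⟨σ (k.succAbove m), (Equiv.injective σ).ne_iff.2 (Fin.succAbove_ne k m)⟩
  rw [finSuccAboveEquiv_apply] at h2
  rw [h]
  exact congrArg Subtype.val h2

variable {L U : Type*} [Ring U] [Algebra ℚ U] (j : L → U) (nab : L → L → L)

theorem EMap_comp_perm : ∀ (n : ℕ) (X : Fin n → L) (σ : Equiv.Perm (Fin n)),
    EMap j nab n (X ∘ σ) = EMap j nab n X := by
  intro n
  induction n with
  | zero => intro X σ; rfl
  | succ n ih =>
    intro X σ
    show EMap j nab (n+1) (X ∘ σ) = EMap j nab (n+1) X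
    rw [EMap, EMap]
    congr 1
    refine congrArg₂ (· - ·) ?_ ?_
    · rw [← Equiv.sum_comp σ (fun k => j (X k) * EMap j nab n (X ∘ k.succAbove))]
      refine Finset.sum_congr rfl fun k _ => ?_
      show j (X (σ k)) * EMap j nab n ((X ∘ σ) ∘ k.succAbove) = _
      congr 1
      have hc : (X ∘ σ) ∘ k.succAbove = (X ∘ (σ k).succAbove) ∘ (permAux σ k) := by
        funext m
        simp only [Function.comp_apply, permAux_spec]
      rw [hc, ih]
    · rw [← Equiv.sum_comp σ (fun k => ∑ m : Fin n, EMap j nab n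
        (Function.update (X ∘ k.succAbove) m (nab (X k) (X (k.succAbove m)))))]
      refine Finset.sum_congr rfl fun k _ => ?_
      rw [← Equiv.sum_comp (permAux σ k) (fun m => EMap j nab n
        (Function.update (X ∘ (σ k).succAbove) m (nab (X (σ k)) (X ((σ k).succAbove m)))))]
      refine Finset.sum_congr rfl fun m _ => ?_
      have hc : (X ∘ σ) ∘ k.succAbove = (X ∘ (σ k).succAbove) ∘ (permAux σ k) := by
        funext m'; simp only [Function.comp_apply, permAux_spec]
      show EMap j nab n (Function.update ((X ∘ σ) ∘ k.succAbove) m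
          (nab ((X ∘ σ) k) ((X ∘ σ) (k.succAbove m)))) = _
      simp only [Function.comp_apply]
      rw [← permAux_spec σ k m, hc]
      have hu := Function.update_comp_equiv (X ∘ (σ k).succAbove)
        ((permAux σ k) : Fin n ≃ Fin n)
        (permAux σ k m) (nab (X (σ k)) (X ((σ k).succAbove (permAux σ k m))))
      rw [Equiv.symm_apply_apply] at hu
      rw [← hu, ih]


end

section
variable {A L U : Type*} [CommRing A] [Algebra ℚ A]
    [AddCommGroup L] [Module A L] [Ring U] [Algebra ℚ U] [Module A U]
    (ι : A →+* U) (j : L → U) (ρ : L → A → A) (nab : L → L → L)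
    (hj_add : ∀ X Y : L, j (X + Y) = j X + j Y)
    (hj_smul : ∀ (a : A) (X : L), j (a • X) = ι a * j X)
    (hcomm : ∀ (X : L) (a : A), j X * ι a = ι a * j X + ι (ρ X a))
    (hnab_add₁ : ∀ X Y Z : L, nab (X + Y) Z = nab X Z + nab Y Z)
    (hnab_add₂ : ∀ X Y Z : L, nab X (Y + Z) = nab X Y + nab X Z)
    (hnab_smul₁ : ∀ (a : A) (X Y : L), nab (a • X) Y = a • nab X Y)
    (hnab_smul₂ : ∀ (a : A) (X Y : L), nab X (a • Y) = ρ X a • Y + a • nab X Y)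

include hj_add hj_smul hcomm hnab_add₁ hnab_add₂ hnab_smul₁ hnab_smul₂ in
theorem EMap_ml : ∀ n : ℕ,
    (∀ (X : Fin n → L) (i : Fin n) (x y : L),
      EMap j nab n (Function.update X i (x + y)) =
        EMap j nab n (Function.update X i x) + EMap j nab n (Function.update X i y)) ∧
    (∀ (X : Fin n → L) (i : Fin n) (a : A) (x : L),
      EMap j nab n (Function.update X i (a • x)) =
        ι a * EMap j nab n (Function.update X i x)) := by
  intro n
  induction n with
  | zero => exact ⟨fun X i => i.elim0, fun X i => i.elim0⟩
  | succ n ih =>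
    have h1 : ∀ (X : Fin (n+1) → L) (i : Fin (n+1)) (z : L),
        (Function.update X i z) ∘ i.succAbove = X ∘ i.succAbove := by
      intro X i z; funext m
      simp only [Function.comp_apply]
      exact Function.update_of_ne (Fin.succAbove_ne i m) _ _
    have h2 : ∀ (X : Fin (n+1) → L) (i : Fin (n+1)) (k : Fin (n+1)) (_ : k ≠ i)
        (i' : Fin n) (hi' : k.succAbove i' = i) (z : L),
        (Function.update X i z) ∘ k.succAbove =
          Function.update (X ∘ k.succAbove) i' z := by
      intro X i k hk i' hi' z; funext m
      by_cases hm : m = i'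
      · subst hm
        show Function.update X i z (k.succAbove m) = _
        rw [hi', Function.update_self, Function.update_self]
      · have hne : k.succAbove m ≠ i := by
          rw [← hi']; exact fun hcon => hm (Fin.succAbove_right_injective hcon)
        show Function.update X i z (k.succAbove m) = _
        rw [Function.update_of_ne hne, Function.update_of_ne hm]
        rfl
    constructor
    · -- additivity
      intro X i x y
      rw [EMap, EMap, EMap]
      have hS1 : (∑ k : Fin (n+1), j (Function.update X i (x + y) k) *
            EMap j nab n (Function.update X i (x + y) ∘ k.succAbove)) =
          (∑ k : Fin (n+1), j (Function.update X i x k) *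
            EMap j nab n (Function.update X i x ∘ k.succAbove)) +
          (∑ k : Fin (n+1), j (Function.update X i y k) *
            EMap j nab n (Function.update X i y ∘ k.succAbove)) := by
        rw [← Finset.sum_add_distrib]
        refine Finset.sum_congr rfl fun k _ => ?_
        by_cases hk : k = i
        · subst hk
          rw [h1, h1, h1, Function.update_self, Function.update_self, Function.update_self,
            hj_add, add_mul]
        · obtain ⟨i', hi'⟩ := Fin.exists_succAbove_eq (Ne.symm hk)
          rw [Function.update_of_ne hk, Function.update_of_ne hk, Function.update_of_ne hk,
            h2 X i k hk i' hi' (x + y), h2 X i k hk i' hi' x, h2 X i k hk i' hi' y,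
            ih.1 (X ∘ k.succAbove) i' x y, mul_add]
      have hS2 : (∑ k : Fin (n+1), ∑ m : Fin n, EMap j nab n
            (Function.update (Function.update X i (x + y) ∘ k.succAbove) m
              (nab (Function.update X i (x + y) k)
                (Function.update X i (x + y) (k.succAbove m))))) =
          (∑ k : Fin (n+1), ∑ m : Fin n, EMap j nab n
            (Function.update (Function.update X i x ∘ k.succAbove) m
              (nab (Function.update X i x k)
                (Function.update X i x (k.succAbove m))))) +
          (∑ k : Fin (n+1), ∑ m : Fin n, EMap j nab n
            (Function.update (Function.update X i y ∘ k.succAbove) m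
              (nab (Function.update X i y k)
                (Function.update X i y (k.succAbove m))))) := by
        rw [← Finset.sum_add_distrib]
        refine Finset.sum_congr rfl fun k _ => ?_
        rw [← Finset.sum_add_distrib]
        refine Finset.sum_congr rfl fun m _ => ?_
        by_cases hk : k = i
        · subst hk
          rw [h1, h1, h1, Function.update_self, Function.update_self, Function.update_self,
            Function.update_of_ne (Fin.succAbove_ne k m),
            Function.update_of_ne (Fin.succAbove_ne k m),
            Function.update_of_ne (Fin.succAbove_ne k m),
            hnab_add₁, ih.1]
        · obtain ⟨i', hi'⟩ := Fin.exists_succAbove_eq (Ne.symm hk)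
          rw [Function.update_of_ne hk, Function.update_of_ne hk, Function.update_of_ne hk,
            h2 X i k hk i' hi' (x + y), h2 X i k hk i' hi' x, h2 X i k hk i' hi' y]
          by_cases hm : m = i'
          · subst hm
            have hv : ∀ z : L, Function.update X i z (k.succAbove m) = z := by
              intro z; rw [hi', Function.update_self]
            rw [hv, hv, hv, Function.update_idem, Function.update_idem, Function.update_idem,
              hnab_add₂, ih.1]
          · have hne : k.succAbove m ≠ i := by
              rw [← hi']; exact fun hcon => hm (Fin.succAbove_right_injective hcon)
            have hv : ∀ z : L, Function.update X i z (k.succAbove m) = X (k.succAbove m) :=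
              fun z => Function.update_of_ne hne _ _
            rw [hv, hv, hv, Function.update_comm (Ne.symm hm),
              Function.update_comm (Ne.symm hm), Function.update_comm (Ne.symm hm), ih.1]
      rw [hS1, hS2, add_sub_add_comm, smul_add]
    · -- smul
      intro X i a x
      rw [EMap, EMap]
      have hS1 : (∑ k : Fin (n+1), j (Function.update X i (a • x) k) *
            EMap j nab n (Function.update X i (a • x) ∘ k.succAbove)) =
          ι a * (∑ k : Fin (n+1), j (Function.update X i x k) *
            EMap j nab n (Function.update X i x ∘ k.succAbove)) +
          ∑ k : Fin (n+1), (if k = i then 0 else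
            ι (ρ (X k) a) * EMap j nab n (Function.update X i x ∘ k.succAbove)) := by
        rw [Finset.mul_sum, ← Finset.sum_add_distrib]
        refine Finset.sum_congr rfl fun k _ => ?_
        by_cases hk : k = i
        · rw [if_pos hk]
          subst hk
          rw [h1, h1, Function.update_self, Function.update_self, hj_smul, add_zero, mul_assoc]
        · rw [if_neg hk]
          obtain ⟨i', hi'⟩ := Fin.exists_succAbove_eq (Ne.symm hk)
          rw [Function.update_of_ne hk, Function.update_of_ne hk,
            h2 X i k hk i' hi' (a • x), h2 X i k hk i' hi' x,
            ih.2 (X ∘ k.succAbove) i' a x, ← mul_assoc, hcomm (X k) a, add_mul, mul_assoc]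
      have hS2 : (∑ k : Fin (n+1), ∑ m : Fin n, EMap j nab n
            (Function.update (Function.update X i (a • x) ∘ k.succAbove) m
              (nab (Function.update X i (a • x) k)
                (Function.update X i (a • x) (k.succAbove m))))) =
          ι a * (∑ k : Fin (n+1), ∑ m : Fin n, EMap j nab n
            (Function.update (Function.update X i x ∘ k.succAbove) m
              (nab (Function.update X i x k)
                (Function.update X i x (k.succAbove m))))) +
          ∑ k : Fin (n+1), (if k = i then 0 else
            ι (ρ (X k) a) * EMap j nab n (Function.update X i x ∘ k.succAbove)) := by
        rw [Finset.mul_sum, ← Finset.sum_add_distrib]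
        refine Finset.sum_congr rfl fun k _ => ?_
        by_cases hk : k = i
        · rw [if_pos hk]
          subst hk
          rw [add_zero, Finset.mul_sum]
          refine Finset.sum_congr rfl fun m _ => ?_
          rw [h1, h1, Function.update_self, Function.update_self,
            Function.update_of_ne (Fin.succAbove_ne k m),
            Function.update_of_ne (Fin.succAbove_ne k m),
            hnab_smul₁, ih.2]
        · rw [if_neg hk]
          obtain ⟨i', hi'⟩ := Fin.exists_succAbove_eq (Ne.symm hk)
          rw [Fintype.sum_eq_add_sum_compl i', Fintype.sum_eq_add_sum_compl i',
            mul_add, Finset.mul_sum]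
          have hsplit : ∀ z : L, Function.update X i z (k.succAbove i') = z := by
            intro z; rw [hi', Function.update_self]
          have hcompl : ∀ m ∈ ({i'}ᶜ : Finset (Fin n)),
              EMap j nab n (Function.update (Function.update X i (a • x) ∘ k.succAbove) m
                (nab (Function.update X i (a • x) k)
                  (Function.update X i (a • x) (k.succAbove m)))) =
              ι a * EMap j nab n (Function.update (Function.update X i x ∘ k.succAbove) m
                (nab (Function.update X i x k)
                  (Function.update X i x (k.succAbove m)))) := by
            intro m hm
            have hm' : m ≠ i' := by simpa using hm
            have hne : k.succAbove m ≠ i := by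
              rw [← hi']; exact fun hcon => hm' (Fin.succAbove_right_injective hcon)
            rw [Function.update_of_ne hne, Function.update_of_ne hne,
              Function.update_of_ne hk, Function.update_of_ne hk,
              h2 X i k hk i' hi' (a • x), h2 X i k hk i' hi' x,
              Function.update_comm (Ne.symm hm'), Function.update_comm (Ne.symm hm'), ih.2]
          rw [Finset.sum_congr rfl hcompl]
          rw [hsplit, hsplit, Function.update_of_ne hk, Function.update_of_ne hk,
            h2 X i k hk i' hi' (a • x), h2 X i k hk i' hi' x,
            Function.update_idem, Function.update_idem, hnab_smul₂, ih.1, ih.2, ih.2]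
          abel
      rw [hS1, hS2, add_sub_add_right_eq_sub, ← mul_sub, mul_smul_comm]


end

section
open TensorAlgebra in
/-- monomial in the tensor algebra -/
def TAmono (A : Type*) {L : Type*} [CommRing A] [AddCommGroup L] [Module A L]
    (n : ℕ) (X : Fin n → L) : TensorAlgebra A L :=
  (List.ofFn fun i => TensorAlgebra.ι A (X i)).prod

variable {A L U : Type*} [CommRing A]
    [AddCommGroup L] [Module A L] [Ring U] [Algebra ℚ U] [Module A U]

lemma TAmono_mul (p q : ℕ) (Xp : Fin p → L) (Xq : Fin q → L) :
    TAmono A p Xp * TAmono A q Xq = TAmono A (p + q) (Fin.append Xp Xq) := by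
  unfold TAmono
  rw [← List.prod_append, ← List.ofFn_fin_append]
  refine congrArg List.prod (congrArg List.ofFn ?_)
  funext i
  induction i using Fin.addCases with
  | left i => rw [Fin.append_left, Fin.append_left]
  | right i => rw [Fin.append_right, Fin.append_right]

lemma span_TAmono :
    Submodule.span A {x : TensorAlgebra A L | ∃ (n : ℕ) (X : Fin n → L), x = TAmono A n X} = ⊤ := by
  rw [eq_top_iff]
  intro z hz
  clear hz
  set S := Submodule.span A {x : TensorAlgebra A L | ∃ (n : ℕ) (X : Fin n → L), x = TAmono A n X}
  have hSS : ∀ a b : TensorAlgebra A L, a ∈ S → b ∈ S → a * b ∈ S := by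
    intro a b ha hb
    have hmm := Submodule.mul_mem_mul ha hb
    have hle : S * S ≤ S := by
      rw [Submodule.span_mul_span]
      refine Submodule.span_le.2 ?_
      rintro w hw
      rw [Set.mem_mul] at hw
      obtain ⟨s, ⟨ps, Xs, rfl⟩, t, ⟨pt, Xt, rfl⟩, rfl⟩ := hw
      exact Submodule.subset_span ⟨ps + pt, Fin.append Xs Xt, TAmono_mul _ _ _ _⟩
    exact hle hmm
  induction z using TensorAlgebra.induction with
  | algebraMap r =>
    rw [Algebra.algebraMap_eq_smul_one]
    refine Submodule.smul_mem _ r (Submodule.subset_span ⟨0, Fin.elim0, ?_⟩)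
    simp [TAmono]
  | ι x =>
    refine Submodule.subset_span ⟨1, fun _ => x, ?_⟩
    simp [TAmono]
  | mul a b ha hb => exact hSS a b ha hb
  | add a b ha hb => exact Submodule.add_mem _ ha hb

variable (ι : A →+* U) (j : L → U) (nab : L → L → L)

/-- `E_n` as a multilinear map, given the multilinearity facts. -/
def Eml (n : ℕ)
    (hadd : ∀ (X : Fin n → L) (i : Fin n) (x y : L),
      EMap j nab n (Function.update X i (x + y)) =
        EMap j nab n (Function.update X i x) + EMap j nab n (Function.update X i y))
    (hsmul : ∀ (X : Fin n → L) (i : Fin n) (a : A) (x : L),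
      EMap j nab n (Function.update X i (a • x)) =
        ι a * EMap j nab n (Function.update X i x))
    (hAU : ∀ (a : A) (u : U), a • u = ι a * u) :
    MultilinearMap A (fun _ : Fin n => L) U where
  toFun := EMap j nab n
  map_update_add' := by
    intro dec X i x y
    have hd : dec = instDecidableEqFin n := Subsingleton.elim _ _
    subst hd
    exact hadd X i x y
  map_update_smul' := by
    intro dec X i c x
    have hd : dec = instDecidableEqFin n := Subsingleton.elim _ _
    subst hd
    rw [hsmul X i c x, hAU]

/-- The linear map `TensorAlgebra A L →ₗ[A] U` induced by the maps `E_n`. -/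
def phiMap
    (hml : ∀ n : ℕ,
      (∀ (X : Fin n → L) (i : Fin n) (x y : L),
        EMap j nab n (Function.update X i (x + y)) =
          EMap j nab n (Function.update X i x) + EMap j nab n (Function.update X i y)) ∧
      (∀ (X : Fin n → L) (i : Fin n) (a : A) (x : L),
        EMap j nab n (Function.update X i (a • x)) =
          ι a * EMap j nab n (Function.update X i x)))
    (hAU : ∀ (a : A) (u : U), a • u = ι a * u) :
    TensorAlgebra A L →ₗ[A] U :=
  (DirectSum.toModule A ℕ U fun n =>
      PiTensorProduct.lift (Eml ι j nab n (hml n).1 (hml n).2 hAU)).comp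
    (TensorAlgebra.toDirectSum (R := A) (M := L)).toLinearMap

lemma phiMap_mono (hml) (hAU) (n : ℕ) (X : Fin n → L) :
    phiMap ι j nab hml hAU (TAmono A n X) = EMap j nab n X := by
  have h : TAmono A n X = TensorAlgebra.tprod A L n X :=
    (TensorAlgebra.tprod_apply A L X).symm
  rw [h]
  unfold phiMap
  rw [LinearMap.comp_apply, AlgHom.toLinearMap_apply,
    TensorAlgebra.toDirectSum_tensorPower_tprod, ← DirectSum.lof_eq_of A,
    DirectSum.toModule_lof, PiTensorProduct.lift.tprod]
  rfl


end

section
variable {A L U : Type*} [CommRing A]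
    [AddCommGroup L] [Module A L] [Ring U] [Algebra ℚ U] [Module A U]

variable (j : L → U) (nab : L → L → L)

-- the swapped tuple is a permutation of the original
lemma append_swap (p q : ℕ) (Xp : Fin p → L) (Xq : Fin q → L) (x y : L) :
    ∃ σ : Equiv.Perm (Fin (p + (2 + q))),
      Fin.append Xp (Fin.append ![y, x] Xq) =
        Fin.append Xp (Fin.append ![x, y] Xq) ∘ σ := by
  set a : Fin (p + (2 + q)) := Fin.natAdd p (Fin.castAdd q (0 : Fin 2)) with ha
  set b : Fin (p + (2 + q)) := Fin.natAdd p (Fin.castAdd q (1 : Fin 2)) with hb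
  have hab : a ≠ b := by
    simp only [ha, hb, Ne, Fin.ext_iff, Fin.coe_natAdd, Fin.coe_castAdd]
    omega
  refine ⟨Equiv.swap a b, ?_⟩
  funext i
  rcases eq_or_ne i a with rfl | hia
  · rw [Function.comp_apply, Equiv.swap_apply_left, ha, hb,
      Fin.append_right, Fin.append_right, Fin.append_left, Fin.append_left]
    simp
  rcases eq_or_ne i b with rfl | hib
  · rw [Function.comp_apply, Equiv.swap_apply_right, ha, hb,
      Fin.append_right, Fin.append_right, Fin.append_left, Fin.append_left]
    simp
  rw [Function.comp_apply, Equiv.swap_apply_of_ne_of_ne hia hib]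
  induction i using Fin.addCases with
  | left s => rw [Fin.append_left, Fin.append_left]
  | right t =>
    rw [Fin.append_right, Fin.append_right]
    induction t using Fin.addCases with
    | left s =>
      exfalso
      simp only [ha, hb, Ne, Fin.ext_iff, Fin.coe_natAdd, Fin.coe_castAdd,
        Fin.val_zero, Fin.val_one] at hia hib
      omega
    | right s => rw [Fin.append_right, Fin.append_right]

lemma phi_swap (φ : TensorAlgebra A L →ₗ[A] U)
    (hφ : ∀ (n : ℕ) (X : Fin n → L), φ (TAmono A n X) = EMap j nab n X)
    (hperm : ∀ (n : ℕ) (X : Fin n → L) (σ : Equiv.Perm (Fin n)),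
      EMap j nab n (X ∘ σ) = EMap j nab n X)
    (x y : L) (u v : TensorAlgebra A L) :
    φ (u * (TensorAlgebra.ι A x * TensorAlgebra.ι A y * v)) =
      φ (u * (TensorAlgebra.ι A y * TensorAlgebra.ι A x * v)) := by
  have hxy : ∀ z w : L, TensorAlgebra.ι A z * TensorAlgebra.ι A w = TAmono A 2 ![z, w] := by
    intro z w
    simp [TAmono, List.ofFn_succ]
  have key : ∀ (p : ℕ) (Xp : Fin p → L) (q : ℕ) (Xq : Fin q → L),
      φ (TAmono A p Xp * (TensorAlgebra.ι A x * TensorAlgebra.ι A y * TAmono A q Xq)) =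
        φ (TAmono A p Xp * (TensorAlgebra.ι A y * TensorAlgebra.ι A x * TAmono A q Xq)) := by
    intro p Xp q Xq
    rw [hxy, hxy, TAmono_mul, TAmono_mul, TAmono_mul, TAmono_mul]
    obtain ⟨σ, hσ⟩ := append_swap p q Xp Xq x y
    rw [hφ, hφ, hσ, hperm]
  -- extend by linearity in u then v
  have hspan := span_TAmono (A := A) (L := L)
  have claim1 : ∀ (q : ℕ) (Xq : Fin q → L) (u : TensorAlgebra A L),
      φ (u * (TensorAlgebra.ι A x * TensorAlgebra.ι A y * TAmono A q Xq)) =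
        φ (u * (TensorAlgebra.ι A y * TensorAlgebra.ι A x * TAmono A q Xq)) := by
    intro q Xq u
    have hu : u ∈ Submodule.span A
        {x : TensorAlgebra A L | ∃ (n : ℕ) (X : Fin n → L), x = TAmono A n X} := by
      rw [hspan]; exact Submodule.mem_top
    induction hu using Submodule.span_induction with
    | mem w hw => obtain ⟨p, Xp, rfl⟩ := hw; exact key p Xp q Xq
    | zero => simp
    | add w₁ w₂ _ _ ih1 ih2 => rw [add_mul, add_mul, map_add, map_add, ih1, ih2]
    | smul c w _ ih => rw [smul_mul_assoc, smul_mul_assoc, map_smul, map_smul, ih]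
  have hv : v ∈ Submodule.span A
      {x : TensorAlgebra A L | ∃ (n : ℕ) (X : Fin n → L), x = TAmono A n X} := by
    rw [hspan]; exact Submodule.mem_top
  induction hv using Submodule.span_induction with
  | mem w hw => obtain ⟨q, Xq, rfl⟩ := hw; exact claim1 q Xq u
  | zero => simp
  | add w₁ w₂ _ _ ih1 ih2 =>
    simp only [mul_add, map_add]
    rw [ih1, ih2]
  | smul c w _ ih =>
    simp only [mul_smul_comm, map_smul]
    rw [ih]

lemma phi_rel (φ : TensorAlgebra A L →ₗ[A] U)
    (hswap : ∀ (x y : L) (u v : TensorAlgebra A L),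
      φ (u * (TensorAlgebra.ι A x * TensorAlgebra.ι A y * v)) =
        φ (u * (TensorAlgebra.ι A y * TensorAlgebra.ι A x * v))) :
    ∀ a b, RingQuot.Rel (SymRel A L) a b → ∀ u v : TensorAlgebra A L,
      φ (u * (a * v)) = φ (u * (b * v)) := by
  intro a b h
  induction h with
  | of h =>
    rcases h with ⟨x, y⟩
    intro u v
    exact hswap x y u v
  | add_left h ih =>
    rename_i a' b' c'
    intro u v
    simp only [add_mul, mul_add, map_add]
    rw [ih u v]
  | mul_left h ih =>
    rename_i a' b' c'
    intro u v
    rw [mul_assoc a' c' v, mul_assoc b' c' v]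
    exact ih u (c' * v)
  | mul_right h ih =>
    rename_i a' b' c'
    intro u v
    rw [mul_assoc a' b' v, mul_assoc a' c' v,
      ← mul_assoc u a' (b' * v), ← mul_assoc u a' (c' * v)]
    exact ih (u * a') v

lemma phi_ker [Algebra ℚ A] (φ : TensorAlgebra A L →ₗ[A] U)
    (hswap : ∀ (x y : L) (u v : TensorAlgebra A L),
      φ (u * (TensorAlgebra.ι A x * TensorAlgebra.ι A y * v)) =
        φ (u * (TensorAlgebra.ι A y * TensorAlgebra.ι A x * v))) :
    LinearMap.ker (RingQuot.mkAlgHom A (SymRel A L)).toLinearMap ≤ LinearMap.ker φ := by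
  intro z hz
  have h0 : RingQuot.mkAlgHom A (SymRel A L) z = RingQuot.mkAlgHom A (SymRel A L) 0 := by
    rw [map_zero]
    simpa using hz
  have h0' : RingQuot.mkRingHom (SymRel A L) z = RingQuot.mkRingHom (SymRel A L) 0 := by
    rw [← RingQuot.mkAlgHom_coe A (SymRel A L)]
    exact h0
  rw [RingQuot.mkRingHom_def] at h0'
  have h1 : Quot.mk (RingQuot.Rel (SymRel A L)) z = Quot.mk _ 0 :=
    congrArg RingQuot.toQuot h0'
  have h2 : Relation.EqvGen (RingQuot.Rel (SymRel A L)) z 0 := Quot.eq.1 h1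
  have h3 : ∀ a b, Relation.EqvGen (RingQuot.Rel (SymRel A L)) a b → φ a = φ b := by
    intro a b h
    induction h with
    | rel a b h => simpa using phi_rel φ hswap a b h 1 1
    | refl a => rfl
    | symm a b _ ih => exact ih.symm
    | trans a b c _ _ ih1 ih2 => exact ih1.trans ih2
  rw [LinearMap.mem_ker]
  simpa using h3 z 0 h2


end

end EAux

theorem EMap_symmetric_and_descends
    {A L U : Type*} [CommRing A] [Algebra ℚ A]
    [AddCommGroup L] [Module A L] [Ring U] [Algebra ℚ U] [Module A U]
    (ι : A →+* U) (j : L → U) (ρ : L → A → A) (nab : L → L → L)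
    -- the `A`-module structure on `U` is left multiplication through `ι`
    (hAU : ∀ (a : A) (u : U), a • u = ι a * u)
    (hj_add : ∀ X Y : L, j (X + Y) = j X + j Y)
    (hj_smul : ∀ (a : A) (X : L), j (a • X) = ι a * j X)
    (hρ_add : ∀ (X Y : L) (a : A), ρ (X + Y) a = ρ X a + ρ Y a)
    (hρ_smul : ∀ (a : A) (X : L) (b : A), ρ (a • X) b = a * ρ X b)
    (hρ_der : ∀ (X : L) (a b : A), ρ X (a * b) = a * ρ X b + b * ρ X a)
    (hcomm : ∀ (X : L) (a : A), j X * ι a = ι a * j X + ι (ρ X a))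
    (hnab_add₁ : ∀ X Y Z : L, nab (X + Y) Z = nab X Z + nab Y Z)
    (hnab_add₂ : ∀ X Y Z : L, nab X (Y + Z) = nab X Y + nab X Z)
    (hnab_smul₁ : ∀ (a : A) (X Y : L), nab (a • X) Y = a • nab X Y)
    (hnab_smul₂ : ∀ (a : A) (X Y : L), nab X (a • Y) = ρ X a • Y + a • nab X Y) :
    -- each `E_n` is symmetric in its arguments …
    (∀ (n : ℕ) (X : Fin n → L) (σ : Equiv.Perm (Fin n)),
        EMap j nab n (X ∘ σ) = EMap j nab n X) ∧
      -- … and consequently the maps `E_n` descend to an `A`-module morphism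
      -- `pbw : S_A(L) → U(L)`, the formal exponential map
      ∃ pbw : SymmAlgebra A L →ₗ[A] U,
        ∀ (n : ℕ) (X : Fin n → L),
          pbw (symMonomial A n X) = EMap j nab n X := by
  classical
  refine ⟨EAux.EMap_comp_perm j nab, ?_⟩
  have hml := EAux.EMap_ml ι j ρ nab hj_add hj_smul hcomm hnab_add₁ hnab_add₂
    hnab_smul₁ hnab_smul₂
  set φ := EAux.phiMap ι j nab hml hAU with hφdef
  have hφ : ∀ (n : ℕ) (X : Fin n → L), φ (EAux.TAmono A n X) = EMap j nab n X :=
    EAux.phiMap_mono ι j nab hml hAU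
  have hswap : ∀ (x y : L) (u v : TensorAlgebra A L),
      φ (u * (TensorAlgebra.ι A x * TensorAlgebra.ι A y * v)) =
        φ (u * (TensorAlgebra.ι A y * TensorAlgebra.ι A x * v)) :=
    fun x y u v => EAux.phi_swap j nab φ hφ (EAux.EMap_comp_perm j nab) x y u v
  have hker := EAux.phi_ker φ hswap
  have hf : Function.Surjective (RingQuot.mkAlgHom A (SymRel A L)).toLinearMap :=
    RingQuot.mkAlgHom_surjective A (SymRel A L)
  set f := (RingQuot.mkAlgHom A (SymRel A L)).toLinearMap with hfdef
  let e := LinearMap.quotKerEquivOfSurjective f hf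
  refine ⟨(Submodule.liftQ (LinearMap.ker f) φ hker).comp e.symm.toLinearMap, ?_⟩
  intro n X
  have hmk : symMonomial A n X = f (EAux.TAmono A n X) := by
    simp only [symMonomial, ιSym, EAux.TAmono, hfdef, LinearMap.coe_comp,
      Function.comp_apply, AlgHom.toLinearMap_apply, map_list_prod, List.map_ofFn]
    rfl
  rw [hmk, LinearMap.comp_apply]
  have he : e.symm (f (EAux.TAmono A n X)) =
      Submodule.Quotient.mk (EAux.TAmono A n X) := by
    rw [LinearEquiv.symm_apply_eq]
    rfl
  rw [LinearEquiv.coe_coe, he, Submodule.liftQ_apply]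
  exact hφ n X

end
end

section
/- The formal exponential map pbw : S_A(L) → U(L) respects filtrations: for all n and X_1,…,X_n ∈ L, pbw(X_1 ⊙ ⋯ ⊙ X_n) lies in the n-th filtration piece U^{≤n}(L) of the universal enveloping algebra. -/
/-! STATEMENT 2: the formal exponential map respects filtrations:
`pbw(X_1 ⊙ ⋯ ⊙ X_n) ∈ U^{≤n}(L)`. -/

noncomputable section

/-- The standard order filtration `U^{≤n}(L)` on the universal enveloping algebra:
the span of products of at most `n` elements of `L` with coefficients in `A`. -/
def Ufil {A L U : Type*} [CommRing A] [Ring U] [Algebra ℚ U]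
    (ι : A →+* U) (j : L → U) (n : ℕ) : Submodule ℚ U :=
  Submodule.span ℚ
    {u | ∃ m ≤ n, ∃ (a : A) (X : Fin m → L),
      u = ι a * (List.ofFn fun i => j (X i)).prod}

lemma Ufil_mono {A L U : Type*} [CommRing A] [Ring U] [Algebra ℚ U]
    (ι : A →+* U) (j : L → U) {n m : ℕ} (h : n ≤ m) :
    Ufil ι j n ≤ Ufil ι j m := by
  apply Submodule.span_mono
  rintro u ⟨k, hk, a, X, hu⟩
  exact ⟨k, hk.trans h, a, X, hu⟩

lemma mul_mem_Ufil {A L U : Type*} [CommRing A] [Ring U] [Algebra ℚ U]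
    (ι : A →+* U) (j : L → U) (ρ : L → A → A)
    (hcomm : ∀ (X : L) (a : A), j X * ι a = ι a * j X + ι (ρ X a))
    (X : L) {n : ℕ} {u : U} (hu : u ∈ Ufil ι j n) :
    j X * u ∈ Ufil ι j (n + 1) := by
  induction hu using Submodule.span_induction with
  | mem u hu =>
    obtain ⟨m, hm, a, Y, rfl⟩ := hu
    set Z : Fin (m + 1) → L := Fin.cons X Y with hZ
    have : j X * (ι a * (List.ofFn fun i => j (Y i)).prod)
        = ι a * (List.ofFn fun i => j (Z i)).prod
          + ι (ρ X a) * (List.ofFn fun i => j (Y i)).prod := by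
      rw [List.ofFn_succ]
      simp only [hZ, Fin.cons_zero, Fin.cons_succ, List.prod_cons]
      rw [← mul_assoc, hcomm, add_mul, mul_assoc]
    rw [this]
    exact add_mem
      (Submodule.subset_span ⟨m + 1, Nat.succ_le_succ hm, a, Z, rfl⟩)
      (Submodule.subset_span ⟨m, hm.trans (Nat.le_succ n), ρ X a, Y, rfl⟩)
  | zero => simpa using zero_mem _
  | add u v _ _ hu hv => rw [mul_add]; exact add_mem hu hv
  | smul q u _ hu => rw [mul_smul_comm]; exact Submodule.smul_mem _ q hu

/-- `pbw` respects the filtrations: since `pbw(X_1⊙⋯⊙X_n) = E_n(X_1,…,X_n)`,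
this says that `E_n(X_1,…,X_n)` lies in `U^{≤n}(L)`. -/
theorem pbw_mem_filtration
    {A L U : Type*} [CommRing A] [Algebra ℚ A]
    [AddCommGroup L] [Module A L] [Ring U] [Algebra ℚ U]
    (ι : A →+* U) (j : L → U) (ρ : L → A → A) (nab : L → L → L)
    (hj_add : ∀ X Y : L, j (X + Y) = j X + j Y)
    (hj_smul : ∀ (a : A) (X : L), j (a • X) = ι a * j X)
    (hρ_der : ∀ (X : L) (a b : A), ρ X (a * b) = a * ρ X b + b * ρ X a)
    (hcomm : ∀ (X : L) (a : A), j X * ι a = ι a * j X + ι (ρ X a))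
    (hnab_smul₁ : ∀ (a : A) (X Y : L), nab (a • X) Y = a • nab X Y)
    (hnab_smul₂ : ∀ (a : A) (X Y : L), nab X (a • Y) = ρ X a • Y + a • nab X Y)
    (n : ℕ) (X : Fin n → L) :
    EMap j nab n X ∈ Ufil ι j n := by
  induction n with
  | zero =>
    have : (1 : U) = ι 1 * (List.ofFn fun i : Fin 0 => j (Fin.elim0 i : L)).prod := by simp
    rw [EMap, this]
    exact Submodule.subset_span ⟨0, le_refl 0, 1, Fin.elim0, rfl⟩
  | succ n ih =>
    rw [EMap]
    refine Submodule.smul_mem _ _ (sub_mem (Submodule.sum_mem _ fun k _ => ?_)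
      (Submodule.sum_mem _ fun k _ => Submodule.sum_mem _ fun m _ => ?_))
    · exact mul_mem_Ufil ι j ρ hcomm _ (ih _)
    · exact Ufil_mono ι j (Nat.le_succ n) (ih _)

end
end

section
/- Let ∇ be a torsion-free connection on a Lie–Rinehart algebra L (i.e. ∇_X Y − ∇_Y X = [X,Y]). Then for all n ≥ 1 and X_0,…,X_n ∈ L: pbw(X_0 ⊙ ⋯ ⊙ X_n) ≡ X_0·X_1⋯X_n − Σ_{j<k} X_0⋯X̂_j⋯X̂_k⋯X_n · (∇_{X_j}X_k) modulo U^{≤ n−1}(L). -/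
/-!
Induction on the number `m ≥ 2` of factors, through the recursion defining `EMap`.
Modulo `U^{≤ m-2}`, a product of `m - 1` generators can be reordered at will, so the only
second-order information needed is that moving `X_k` from the front of `X_0⋯X̂_k⋯X_{m-1}`
to its place costs `Σ_{i<k} X_0⋯X̂_i⋯X̂_k⋯X_{m-1}·[X_k, X_i]`. In `m` times the recursion,
the term `X_0⋯X̂_p⋯X̂_q⋯X_{m-1}·∇_{X_p}X_q` (`p < q`) then occurs `-(m-2)` times in the
first sum (once for each removed `X_k` with `k ≠ p, q`), the second sum contributes
`-(∇_{X_p}X_q + ∇_{X_q}X_p)`, and torsion-freeness turns the commutator terms into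
`∇_{X_q}X_p - ∇_{X_p}X_q`: everything adds up to `m` times the claimed expression.
-/

noncomputable section

namespace PBW

open Finset
open scoped List

section ErasePositions

variable {α : Type*}

theorem eraseIdx_ofFn {n : ℕ} (X : Fin (n + 1) → α) (k : Fin (n + 1)) :
    (List.ofFn X).eraseIdx k = List.ofFn (X ∘ k.succAbove) := by
  refine List.ext_getElem (by simp [List.length_eraseIdx, Fin.is_le]) fun i h₁ h₂ => ?_
  simp only [List.getElem_eraseIdx, List.getElem_ofFn, Function.comp_apply, Fin.succAbove,
    Fin.lt_def]
  split_ifs <;> first | rfl | (simp at *; omega)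

theorem ofFn_perm_cons_succAbove {n : ℕ} (X : Fin (n + 1) → α) (k : Fin (n + 1)) :
    List.ofFn X ~ X k :: List.ofFn (X ∘ k.succAbove) := by
  have hk : (k : ℕ) < (List.ofFn X).length := by rw [List.length_ofFn]; exact k.isLt
  simpa only [List.getElem_ofFn, eraseIdx_ofFn] using (List.getElem_cons_eraseIdx_perm hk).symm

def eraseTwo (l : List α) (p q : ℕ) : List α := (l.eraseIdx (max p q)).eraseIdx (min p q)

theorem eraseTwo_comm (l : List α) (p q : ℕ) : eraseTwo l p q = eraseTwo l q p := by
  rw [eraseTwo, eraseTwo, max_comm, min_comm]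

theorem eraseTwo_of_lt (l : List α) {p q : ℕ} (h : p < q) :
    eraseTwo l p q = (l.eraseIdx q).eraseIdx p := by
  rw [eraseTwo, max_eq_right h.le, min_eq_left h.le]

theorem length_eraseTwo (l : List α) {p q : ℕ} (hpq : p ≠ q) (hp : p < l.length)
    (hq : q < l.length) :
    (eraseTwo l p q).length = l.length - 2 := by
  rcases hpq.lt_or_gt with h | h
  · rw [eraseTwo_of_lt l h,
      List.length_eraseIdx_of_lt (by simp [List.length_eraseIdx, hq]; omega),
      List.length_eraseIdx_of_lt hq]
    omega
  · rw [eraseTwo_comm, eraseTwo_of_lt l h,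
      List.length_eraseIdx_of_lt (by simp [List.length_eraseIdx, hp]; omega),
      List.length_eraseIdx_of_lt hp]
    omega

theorem perm_cons_cons_eraseTwo (l : List α) {p q : ℕ} (hpq : p ≠ q) (hp : p < l.length)
    (hq : q < l.length) : l ~ l[p] :: l[q] :: eraseTwo l p q := by
  wlog h : p < q generalizing p q
  · rw [eraseTwo_comm]
    exact (this hpq.symm hq hp (by omega)).trans (.swap _ _ _)
  rw [eraseTwo_of_lt l h]
  have hp' : p < (l.eraseIdx q).length := by simp [List.length_eraseIdx, hq]; omega
  calc l ~ (l[q] :: l.eraseIdx q) := (List.getElem_cons_eraseIdx_perm hq).symm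
    _ ~ l[q] :: (l.eraseIdx q)[p] :: (l.eraseIdx q).eraseIdx p :=
      .cons _ (List.getElem_cons_eraseIdx_perm hp').symm
    _ ~ _ := by rw [List.getElem_eraseIdx_of_lt hp' h]; exact .swap _ _ _

theorem ofFn_update_perm {n : ℕ} (Z : Fin (n + 1) → α) (m : Fin (n + 1)) (V : α) :
    List.ofFn (Function.update Z m V) ~ V :: List.ofFn (Z ∘ m.succAbove) := by
  have hrest : Function.update Z m V ∘ m.succAbove = Z ∘ m.succAbove :=
    funext fun i => Function.update_of_ne (Fin.succAbove_ne m i) _ _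
  simpa only [Function.update_self, hrest] using ofFn_perm_cons_succAbove (Function.update Z m V) m

theorem ofFn_perm_cons_cons_eraseTwo {n : ℕ} (X : Fin n → α) {p q : Fin n} (hpq : p ≠ q) :
    List.ofFn X ~ X p :: X q :: eraseTwo (List.ofFn X) p q := by
  simpa using perm_cons_cons_eraseTwo (List.ofFn X) (Fin.val_ne_of_ne hpq) (by simp) (by simp)

theorem ofFn_succAbove_succAbove_perm {n : ℕ} (X : Fin (n + 2) → α) (k : Fin (n + 2))
    (m : Fin (n + 1)) :
    List.ofFn ((X ∘ k.succAbove) ∘ m.succAbove) ~ eraseTwo (List.ofFn X) k (k.succAbove m) := by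
  have h := (ofFn_perm_cons_succAbove X k).trans
    ((ofFn_perm_cons_succAbove (X ∘ k.succAbove) m).cons (X k))
  exact (List.perm_cons _).mp <| (List.perm_cons _).mp <|
    h.symm.trans (ofFn_perm_cons_cons_eraseTwo X (Fin.ne_succAbove k m))

theorem cons_eraseTwo_succAbove_perm {n : ℕ} (X : Fin (n + 1) → α) (k : Fin (n + 1))
    {a b : Fin n} (hab : a ≠ b) :
    X k :: eraseTwo (List.ofFn (X ∘ k.succAbove)) a b
      ~ eraseTwo (List.ofFn X) (k.succAbove a) (k.succAbove b) := by
  have h := ((ofFn_perm_cons_cons_eraseTwo (X ∘ k.succAbove) hab).cons (X k)).symm.trans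
    ((ofFn_perm_cons_succAbove X k).symm.trans
      (ofFn_perm_cons_cons_eraseTwo X ((Fin.succAbove_right_injective (p := k)).ne hab)))
  exact (List.perm_cons _).mp <| (List.perm_cons _).mp <|
    (List.perm_middle (l₁ := [_, _])).trans h

end ErasePositions

section PairSums

variable {M : Type*} [AddCommMonoid M]

def pairSum {N : ℕ} (f : Fin N → Fin N → M) : M :=
  ∑ q : Fin N, ∑ p ∈ univ.filter (· < q), f p q

theorem sum_filter_lt_eq_sum_range {N : ℕ} (k : Fin N) (f : ℕ → M) :
    ∑ i ∈ univ.filter (· < k), f i = ∑ i ∈ range k, f i := by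
  rw [filter_gt_eq_Iio, ← Nat.Iio_eq_range, ← Fin.map_valEmbedding_Iio, sum_map]
  rfl

theorem pairSum_succAbove {n : ℕ} (H : Fin (n + 2) → Fin (n + 2) → M) (k : Fin (n + 2)) :
    pairSum (fun a b => H (k.succAbove a) (k.succAbove b))
      = pairSum (fun p q => if p ≠ k ∧ q ≠ k then H p q else 0) := by
  simp only [pairSum, sum_filter, Fin.sum_univ_succAbove _ k]
  simp [Fin.succAbove_lt_succAbove_iff, Fin.succAbove_ne]

theorem sum_pairSum_succAbove {n : ℕ} (H : Fin (n + 2) → Fin (n + 2) → M) :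
    ∑ k : Fin (n + 2), pairSum (fun a b => H (k.succAbove a) (k.succAbove b))
      = n • pairSum H := by
  simp only [pairSum_succAbove]
  simp only [pairSum, smul_sum]
  rw [sum_comm]
  refine sum_congr rfl fun q _ => ?_
  rw [sum_comm]
  refine sum_congr rfl fun p hp => ?_
  have hpq : p ≠ q := (mem_filter.mp hp).2.ne
  have hcard : (univ.filter fun k => p ≠ k ∧ q ≠ k).card = n := by
    rw [show univ.filter (fun k => p ≠ k ∧ q ≠ k) = {p, q}ᶜ by ext; simp [eq_comm],
      card_compl, card_pair hpq, Fintype.card_fin]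
    rfl
  rw [← sum_filter, sum_const, hcard]

theorem sum_sum_succAbove {n : ℕ} (G : Fin (n + 1) → Fin (n + 1) → M) :
    ∑ k, ∑ m, G k (k.succAbove m) = pairSum G + pairSum (fun p q => G q p) := by
  have hsplit : ∀ k, ∑ m, G k (k.succAbove m)
      = ∑ i, ((if i < k then G k i else 0) + (if k < i then G k i else 0)) := by
    intro k
    rw [Fin.sum_univ_succAbove _ k]
    simp only [lt_irrefl, if_false, add_zero, zero_add]
    refine sum_congr rfl fun m _ => ?_
    rcases (Fin.succAbove_ne k m).lt_or_gt with h | h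
    · simp [h, h.not_gt]
    · simp [h, h.not_gt]
  simp only [hsplit, sum_add_distrib, pairSum, sum_filter]
  rw [add_comm, sum_comm (f := fun k i => if k < i then G k i else 0)]

end PairSums

section Words

variable {L U : Type*} [Ring U] (j : L → U)

def word (l : List L) : U := (l.map j).prod

@[simp] theorem word_nil : word j [] = 1 := rfl

@[simp] theorem word_cons (x : L) (l : List L) : word j (x :: l) = j x * word j l := by
  simp [word]

@[simp] theorem word_append (l₁ l₂ : List L) :
    word j (l₁ ++ l₂) = word j l₁ * word j l₂ := by
  simp [word]

theorem prod_ofFn_eq_word {m : ℕ} (X : Fin m → L) :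
    (List.ofFn fun i => j (X i)).prod = word j (List.ofFn X) := by
  rw [word, List.map_ofFn]
  rfl

theorem prod_eraseIdx_eraseIdx_ofFn {m : ℕ} (X : Fin m → L) (a b : ℕ) :
    (((List.ofFn fun i => j (X i)).eraseIdx a).eraseIdx b).prod
      = word j (((List.ofFn X).eraseIdx a).eraseIdx b) := by
  rw [word, ← List.eraseIdx_map, ← List.eraseIdx_map, List.map_ofFn]
  rfl

theorem j_mul_word [LieRing L] (hbr : ∀ X Y : L, j X * j Y - j Y * j X = j ⁅X, Y⁆)
    (y : L) (l : List L) :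
    j y * word j l = word j l * j y + ∑ i ∈ range l.length,
      word j (l.take i) * j ⁅y, l.getD i 0⁆ * word j (l.drop (i + 1)) := by
  induction l with
  | nil => simp
  | cons a l ih =>
    have hswap : j y * j a = j a * j y + j ⁅y, a⁆ := by rw [← hbr]; abel
    rw [List.length_cons, sum_range_succ']
    simp only [word_cons, List.take_succ_cons, List.getD_cons_succ, List.drop_succ_cons,
      List.take_zero, List.getD_cons_zero, List.drop_zero, word_nil, one_mul]
    rw [← mul_assoc, hswap, add_mul, mul_assoc, ih, mul_add, mul_sum]
    simp only [mul_assoc]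
    abel

end Words

section Filtration

variable {A L U : Type*} [CommRing A] [Ring U] [Algebra ℚ U] (ι : A →+* U) (j : L → U)

theorem Ufil_mono {m n : ℕ} (h : m ≤ n) : Ufil ι j m ≤ Ufil ι j n := by
  apply Submodule.span_mono
  rintro u ⟨m', hm', a, X, rfl⟩
  exact ⟨m', hm'.trans h, a, X, rfl⟩

theorem mul_word_mem_Ufil {n : ℕ} (a : A) {l : List L} (h : l.length ≤ n) :
    ι a * word j l ∈ Ufil ι j n := by
  refine Submodule.subset_span ⟨l.length, h, a, l.get, ?_⟩
  rw [prod_ofFn_eq_word, List.ofFn_get]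

theorem word_mem_Ufil {n : ℕ} {l : List L} (h : l.length ≤ n) : word j l ∈ Ufil ι j n := by
  simpa using mul_word_mem_Ufil ι j 1 h

theorem mul_j_mem_Ufil {n : ℕ} (Y : L) {u : U} (hu : u ∈ Ufil ι j n) :
    u * j Y ∈ Ufil ι j (n + 1) := by
  induction hu using Submodule.span_induction with
  | mem u hu =>
    obtain ⟨m, hm, a, X, rfl⟩ := hu
    simpa [prod_ofFn_eq_word, mul_assoc] using
      mul_word_mem_Ufil ι j a (l := List.ofFn X ++ [Y]) (by simpa using hm)
  | zero => simp
  | add x y _ _ hx hy => rw [add_mul]; exact add_mem hx hy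
  | smul q x _ hx => rw [smul_mul_assoc]; exact Submodule.smul_mem _ q hx

theorem mul_j_smodEq {n : ℕ} (Y : L) {x y : U} (h : x ≡ y [SMOD Ufil ι j n]) :
    x * j Y ≡ y * j Y [SMOD Ufil ι j (n + 1)] := by
  rw [SModEq.sub_mem, ← sub_mul]
  exact mul_j_mem_Ufil ι j Y (SModEq.sub_mem.mp h)

variable {ρ : L → A → A} (hcomm : ∀ (X : L) (a : A), j X * ι a = ι a * j X + ι (ρ X a))
include hcomm

theorem j_mul_mem_Ufil {n : ℕ} (Y : L) {u : U} (hu : u ∈ Ufil ι j n) :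
    j Y * u ∈ Ufil ι j (n + 1) := by
  induction hu using Submodule.span_induction with
  | mem u hu =>
    obtain ⟨m, hm, a, X, rfl⟩ := hu
    rw [prod_ofFn_eq_word, ← mul_assoc, hcomm, add_mul, mul_assoc, ← word_cons]
    exact add_mem (mul_word_mem_Ufil ι j a (by simpa using hm))
      (mul_word_mem_Ufil ι j _ (by simp; omega))
  | zero => simp
  | add x y _ _ hx hy => rw [mul_add]; exact add_mem hx hy
  | smul q x _ hx => rw [mul_smul_comm]; exact Submodule.smul_mem _ q hx

theorem j_mul_smodEq {n : ℕ} (Y : L) {x y : U} (h : x ≡ y [SMOD Ufil ι j n]) :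
    j Y * x ≡ j Y * y [SMOD Ufil ι j (n + 1)] := by
  rw [SModEq.sub_mem, ← mul_sub]
  exact j_mul_mem_Ufil ι j hcomm Y (SModEq.sub_mem.mp h)

theorem word_mul_smodEq {n : ℕ} (l : List L) {x y : U} (h : x ≡ y [SMOD Ufil ι j n]) :
    word j l * x ≡ word j l * y [SMOD Ufil ι j (n + l.length)] := by
  induction l with
  | nil => simpa using h
  | cons a l ih =>
    simp only [word_cons, mul_assoc, List.length_cons, ← add_assoc]
    exact j_mul_smodEq ι j hcomm a ih

end Filtration

section Commutation

variable {A L U : Type*} [CommRing A] [LieRing L] [Ring U] [Algebra ℚ U] (ι : A →+* U)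
  (j : L → U) (hbr : ∀ X Y : L, j X * j Y - j Y * j X = j ⁅X, Y⁆)
include hbr

theorem j_mul_word_smodEq (y : L) (l : List L) :
    j y * word j l ≡ word j l * j y [SMOD Ufil ι j l.length] := by
  rw [SModEq.sub_mem, j_mul_word j hbr, add_sub_cancel_left]
  refine Submodule.sum_mem _ fun i hi => ?_
  have hword : word j (l.take i) * j ⁅y, l.getD i 0⁆ * word j (l.drop (i + 1))
      = word j (l.take i ++ ⁅y, l.getD i 0⁆ :: l.drop (i + 1)) := by
    simp [mul_assoc]
  rw [hword]
  exact word_mem_Ufil ι j (by simp only [mem_range] at hi; simp; omega)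

variable {ρ : L → A → A} (hcomm : ∀ (X : L) (a : A), j X * ι a = ι a * j X + ι (ρ X a))
include hcomm

theorem word_smodEq_of_perm {l l' : List L} (h : l ~ l') {n : ℕ} (hl : l.length ≤ n + 1) :
    word j l ≡ word j l' [SMOD Ufil ι j n] := by
  induction h generalizing n with
  | nil => rfl
  | @cons x l₁ l₂ h ih =>
    cases n with
    | zero =>
      obtain rfl : l₁ = [] := List.length_eq_zero_iff.mp (by simpa using hl)
      rw [List.nil_perm.mp h]
    | succ n =>
      simp only [word_cons]
      exact j_mul_smodEq ι j hcomm x (ih (by simpa using hl))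
  | swap x y l =>
    have hdiff : word j (y :: x :: l) - word j (x :: y :: l) = word j (⁅y, x⁆ :: l) := by
      simp only [word_cons, ← mul_assoc, ← sub_mul, hbr]
    rw [SModEq.sub_mem, hdiff]
    exact word_mem_Ufil ι j (by simpa using hl)
  | trans h₁ _ ih₁ ih₂ => exact (ih₁ hl).trans (ih₂ (h₁.length_eq ▸ hl))

theorem j_mul_word_append_smodEq (y : L) (p s : List L) {n : ℕ}
    (h : p.length + s.length ≤ n + 1) :
    j y * word j (p ++ s) ≡ word j (p ++ y :: s) +
      ∑ i ∈ range p.length, word j ((p ++ s).eraseIdx i) * j ⁅y, p.getD i 0⁆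
      [SMOD Ufil ι j n] := by
  rw [word_append, ← mul_assoc, j_mul_word j hbr, add_mul, sum_mul, word_append, word_cons,
    mul_assoc]
  refine SModEq.add rfl (SModEq.sum fun i hi => ?_)
  have hi : i < p.length := mem_range.mp hi
  rw [List.eraseIdx_append_of_lt_length hi, List.eraseIdx_eq_take_drop_succ, List.append_assoc,
    word_append, word_append, mul_assoc, mul_assoc, mul_assoc, ← word_append]
  refine SModEq.mono (Ufil_mono ι j ?_) (word_mul_smodEq ι j hcomm (p.take i)
    (j_mul_word_smodEq ι j hbr ⁅y, p.getD i 0⁆ (p.drop (i + 1) ++ s)))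
  simp only [List.length_append, List.length_drop, List.length_take]
  omega

end Commutation

section Exponential

variable {L U : Type*} [Ring U] (j : L → U) (nab : L → L → L)

def pairWord {N : ℕ} (X : Fin N → L) (p q : Fin N) : U := word j (eraseTwo (List.ofFn X) p q)

def connectionTerm {N : ℕ} (X : Fin N → L) : U :=
  pairSum fun p q => pairWord j X p q * j (nab (X p) (X q))

theorem pairWord_comm {N : ℕ} (X : Fin N → L) (p q : Fin N) :
    pairWord j X p q = pairWord j X q p := by
  rw [pairWord, pairWord, eraseTwo_comm]

theorem connectionTerm_two (X : Fin 2 → L) : connectionTerm j nab X = j (nab (X 0) (X 1)) := by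
  simp [connectionTerm, pairSum, pairWord, eraseTwo, Fin.sum_univ_two, sum_filter]

theorem connectionTerm_eq_sum {N : ℕ} (X : Fin N → L) :
    connectionTerm j nab X = ∑ k : Fin N, ∑ i ∈ univ.filter (· < k),
      word j (((List.ofFn X).eraseIdx k).eraseIdx i) * j (nab (X i) (X k)) := by
  unfold connectionTerm pairSum pairWord
  exact sum_congr rfl fun _ _ => sum_congr rfl fun _ hi => by
    dsimp only
    rw [eraseTwo_of_lt _ (mem_filter.mp hi).2]

theorem connectionTerm_mem_Ufil {A : Type*} [CommRing A] [Algebra ℚ U] (ι : A →+* U) {n : ℕ}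
    (X : Fin (n + 2) → L) :
    connectionTerm j nab X ∈ Ufil ι j (n + 1) := by
  unfold connectionTerm pairSum
  refine Submodule.sum_mem _ fun q _ => Submodule.sum_mem _ fun p hp => ?_
  refine mul_j_mem_Ufil ι j _ (word_mem_Ufil ι j ?_)
  rw [length_eraseTwo _ (Fin.val_ne_of_ne (mem_filter.mp hp).2.ne)
    (p.isLt.trans_eq List.length_ofFn.symm) (q.isLt.trans_eq List.length_ofFn.symm),
    List.length_ofFn]
  omega

theorem j_nab_sub_j_nab [LieRing L] (hj_add : ∀ X Y : L, j (X + Y) = j X + j Y)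
    (htf : ∀ X Y : L, nab X Y - nab Y X = ⁅X, Y⁆) (X Y : L) :
    j (nab X Y) - j (nab Y X) = j ⁅X, Y⁆ := by
  rw [← htf]
  exact ((AddMonoidHom.mk' j hj_add).map_sub _ _).symm

theorem EMap_two [LieRing L] [Algebra ℚ U] (hj_add : ∀ X Y : L, j (X + Y) = j X + j Y)
    (hbr : ∀ X Y : L, j X * j Y - j Y * j X = j ⁅X, Y⁆)
    (htf : ∀ X Y : L, nab X Y - nab Y X = ⁅X, Y⁆) (X : Fin 2 → L) :
    EMap j nab 2 X = j (X 0) * j (X 1) - j (nab (X 0) (X 1)) := by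
  have hswap : j (X 1) * j (X 0) = j (X 0) * j (X 1) - j ⁅X 0, X 1⁆ := by rw [← hbr]; abel
  have hnab : j (nab (X 1) (X 0)) = j (nab (X 0) (X 1)) - j ⁅X 0, X 1⁆ := by
    rw [← j_nab_sub_j_nab j nab hj_add htf]; abel
  simp [EMap, hswap, hnab]
  module

theorem pairSum_mul_j_bracket_eq [LieRing L] (hj_add : ∀ X Y : L, j (X + Y) = j X + j Y)
    (htf : ∀ X Y : L, nab X Y - nab Y X = ⁅X, Y⁆) {N : ℕ} (X : Fin N → L) :
    pairSum (fun p q => pairWord j X p q * j ⁅X q, X p⁆)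
      = pairSum (fun p q => pairWord j X q p * j (nab (X q) (X p)))
        - connectionTerm j nab X := by
  simp only [connectionTerm, pairSum, ← sum_sub_distrib]
  refine sum_congr rfl fun q _ => sum_congr rfl fun p _ => ?_
  rw [pairWord_comm j X q p, ← mul_sub, j_nab_sub_j_nab j nab hj_add htf]

theorem sum_recursion_terms_eq [LieRing L] [Algebra ℚ U]
    (hj_add : ∀ X Y : L, j (X + Y) = j X + j Y)
    (htf : ∀ X Y : L, nab X Y - nab Y X = ⁅X, Y⁆) {n : ℕ} (X : Fin (n + 3) → L) :
    (∑ k, (word j (List.ofFn X) + ∑ i ∈ univ.filter (· < k), pairWord j X i k * j ⁅X k, X i⁆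
        - pairSum (fun a b => pairWord j X (k.succAbove a) (k.succAbove b)
            * j (nab (X (k.succAbove a)) (X (k.succAbove b))))))
      - ∑ k, ∑ m, pairWord j X k (k.succAbove m) * j (nab (X k) (X (k.succAbove m)))
      = (((n + 2 : ℕ) : ℚ) + 1) • (word j (List.ofFn X) - connectionTerm j nab X) := by
  set H : Fin (n + 3) → Fin (n + 3) → U := fun p q => pairWord j X p q * j (nab (X p) (X q))
  rw [sum_sub_distrib, sum_add_distrib, sum_const, card_univ, Fintype.card_fin,
    sum_pairSum_succAbove H, sum_sum_succAbove H]
  change _ + pairSum (fun p q => pairWord j X p q * j ⁅X q, X p⁆) - _ - _ = _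
  rw [pairSum_mul_j_bracket_eq j nab hj_add htf,
    show (((n + 2 : ℕ) : ℚ) + 1) = ((n + 3 : ℕ) : ℚ) by push_cast; ring, Nat.cast_smul_eq_nsmul]
  simp only [H, connectionTerm]
  module

end Exponential

section InductiveStep

variable {A L U : Type*} [CommRing A] [LieRing L] [Ring U] [Algebra ℚ U] (ι : A →+* U)
  (j : L → U) (nab : L → L → L) (hbr : ∀ X Y : L, j X * j Y - j Y * j X = j ⁅X, Y⁆)
  {ρ : L → A → A} (hcomm : ∀ (X : L) (a : A), j X * ι a = ι a * j X + ι (ρ X a))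
include hbr hcomm

theorem j_mul_word_succAbove_smodEq {n : ℕ} (X : Fin (n + 2) → L) (k : Fin (n + 2)) :
    j (X k) * word j (List.ofFn (X ∘ k.succAbove)) ≡ word j (List.ofFn X) +
      ∑ i ∈ univ.filter (· < k), pairWord j X i k * j ⁅X k, X i⁆ [SMOD Ufil ι j n] := by
  set l := List.ofFn X
  have hlen : l.length = n + 2 := List.length_ofFn
  have hk : (k : ℕ) < l.length := by rw [hlen]; exact k.isLt
  have hl : l = l.take k ++ X k :: l.drop (k + 1) := by
    rw [show X k = l[(k : ℕ)] by simp only [l, List.getElem_ofFn], List.getElem_cons_drop,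
      List.take_append_drop]
  have herase : List.ofFn (X ∘ k.succAbove) = l.take k ++ l.drop (k + 1) := by
    rw [← eraseIdx_ofFn, List.eraseIdx_eq_take_drop_succ]
  have h := j_mul_word_append_smodEq ι j hbr hcomm (X k) (l.take k) (l.drop (k + 1)) (n := n)
    (by rw [List.length_take, List.length_drop, hlen]; omega)
  rw [← herase, ← hl, List.length_take, min_eq_left hk.le, ← sum_filter_lt_eq_sum_range k]
    at h
  convert h using 3 with i hi
  have hik : i < k := (mem_filter.mp hi).2
  rw [pairWord, eraseTwo_of_lt _ hik, eraseIdx_ofFn]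
  congr
  have hik' : (i : ℕ) < k := hik
  rw [List.getD_eq_getElem _ _ (by rw [List.length_take]; omega), List.getElem_take]
  simp only [l, List.getElem_ofFn]

theorem j_mul_pairWord_succAbove_smodEq {n : ℕ} (X : Fin (n + 3) → L) (k : Fin (n + 3))
    {a b : Fin (n + 2)} (hab : a ≠ b) (V : L) :
    j (X k) * (pairWord j (X ∘ k.succAbove) a b * j V)
      ≡ pairWord j X (k.succAbove a) (k.succAbove b) * j V [SMOD Ufil ι j (n + 1)] := by
  rw [← mul_assoc, pairWord, pairWord, ← word_cons]
  refine mul_j_smodEq ι j V (word_smodEq_of_perm ι j hbr hcomm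
    (cons_eraseTwo_succAbove_perm X k hab) ?_)
  rw [List.length_cons, length_eraseTwo _ (Fin.val_ne_of_ne hab)
    (a.isLt.trans_eq List.length_ofFn.symm) (b.isLt.trans_eq List.length_ofFn.symm),
    List.length_ofFn]
  omega

variable {n : ℕ} (ih : ∀ Y : Fin (n + 2) → L,
  EMap j nab (n + 2) Y ≡ word j (List.ofFn Y) - connectionTerm j nab Y [SMOD Ufil ι j n])
include ih

theorem j_mul_EMap_succAbove_smodEq (X : Fin (n + 3) → L) (k : Fin (n + 3)) :
    j (X k) * EMap j nab (n + 2) (X ∘ k.succAbove)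
      ≡ word j (List.ofFn X) + ∑ i ∈ univ.filter (· < k), pairWord j X i k * j ⁅X k, X i⁆
        - pairSum (fun a b => pairWord j X (k.succAbove a) (k.succAbove b)
            * j (nab (X (k.succAbove a)) (X (k.succAbove b)))) [SMOD Ufil ι j (n + 1)] := by
  refine (j_mul_smodEq ι j hcomm (X k) (ih _)).trans ?_
  rw [mul_sub, connectionTerm, pairSum, pairSum, mul_sum]
  simp only [mul_sum]
  exact (j_mul_word_succAbove_smodEq ι j hbr hcomm X k).sub (SModEq.sum fun q _ =>
    SModEq.sum fun p hp => j_mul_pairWord_succAbove_smodEq ι j hbr hcomm X k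
      (mem_filter.mp hp).2.ne _)

theorem EMap_update_smodEq (X : Fin (n + 3) → L) (k : Fin (n + 3)) (m : Fin (n + 2)) (V : L) :
    EMap j nab (n + 2) (Function.update (X ∘ k.succAbove) m V)
      ≡ pairWord j X k (k.succAbove m) * j V [SMOD Ufil ι j (n + 1)] := by
  set Y := Function.update (X ∘ k.succAbove) m V
  set rest := List.ofFn ((X ∘ k.succAbove) ∘ m.succAbove)
  have hrest : rest.length = n + 1 := List.length_ofFn
  calc EMap j nab (n + 2) Y
      ≡ word j (List.ofFn Y) - connectionTerm j nab Y [SMOD Ufil ι j (n + 1)] :=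
        (ih Y).mono (Ufil_mono ι j n.le_succ)
    _ ≡ word j (List.ofFn Y) - 0 [SMOD Ufil ι j (n + 1)] :=
        SModEq.rfl.sub (SModEq.sub_mem.mpr (by simpa using connectionTerm_mem_Ufil j nab ι Y))
    _ ≡ word j (V :: rest) [SMOD Ufil ι j (n + 1)] := by
        rw [sub_zero]
        exact word_smodEq_of_perm ι j hbr hcomm (ofFn_update_perm _ m V) (by simp)
    _ ≡ word j rest * j V [SMOD Ufil ι j (n + 1)] := by
        rw [word_cons, ← hrest]
        exact j_mul_word_smodEq ι j hbr V rest
    _ ≡ pairWord j X k (k.succAbove m) * j V [SMOD Ufil ι j (n + 1)] :=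
        mul_j_smodEq ι j V (word_smodEq_of_perm ι j hbr hcomm
          (ofFn_succAbove_succAbove_perm X k m) hrest.le)

theorem EMap_succ_smodEq (hj_add : ∀ X Y : L, j (X + Y) = j X + j Y)
    (htf : ∀ X Y : L, nab X Y - nab Y X = ⁅X, Y⁆) (X : Fin (n + 3) → L) :
    EMap j nab (n + 3) X
      ≡ word j (List.ofFn X) - connectionTerm j nab X [SMOD Ufil ι j (n + 1)] := by
  set c : ℚ := ((n + 2 : ℕ) : ℚ) + 1
  have hA := SModEq.sum (s := univ) fun k _ =>
    j_mul_EMap_succAbove_smodEq ι j nab hbr hcomm ih X k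
  have hB := SModEq.sum (s := univ) fun k _ => SModEq.sum (s := univ) fun m _ =>
    EMap_update_smodEq ι j nab hbr hcomm ih X k m (nab (X k) (X (k.succAbove m)))
  calc EMap j nab (n + 3) X
      = c⁻¹ • ((∑ k, j (X k) * EMap j nab (n + 2) (X ∘ k.succAbove))
          - ∑ k, ∑ m, EMap j nab (n + 2)
              (Function.update (X ∘ k.succAbove) m (nab (X k) (X (k.succAbove m))))) := rfl
    _ ≡ c⁻¹ • (c • (word j (List.ofFn X) - connectionTerm j nab X)) [SMOD Ufil ι j (n + 1)] := by
        rw [← sum_recursion_terms_eq j nab hj_add htf X]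
        exact (hA.sub hB).smul _
    _ = word j (List.ofFn X) - connectionTerm j nab X := inv_smul_smul₀ (by positivity) _

end InductiveStep

theorem EMap_smodEq {A L U : Type*} [CommRing A] [LieRing L] [Ring U] [Algebra ℚ U]
    (ι : A →+* U) (j : L → U) {ρ : L → A → A} (nab : L → L → L)
    (hj_add : ∀ X Y : L, j (X + Y) = j X + j Y)
    (hcomm : ∀ (X : L) (a : A), j X * ι a = ι a * j X + ι (ρ X a))
    (hbr : ∀ X Y : L, j X * j Y - j Y * j X = j ⁅X, Y⁆)
    (htf : ∀ X Y : L, nab X Y - nab Y X = ⁅X, Y⁆) :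
    ∀ (n : ℕ) (X : Fin (n + 2) → L),
      EMap j nab (n + 2) X ≡ word j (List.ofFn X) - connectionTerm j nab X [SMOD Ufil ι j n]
  | 0, X => by
    rw [EMap_two j nab hj_add hbr htf, connectionTerm_two]
    simp
  | n + 1, X => EMap_succ_smodEq ι j nab hbr hcomm (EMap_smodEq ι j nab hj_add hcomm hbr htf n)
      hj_add htf X

end PBW

/-- The paper's factors `X_0, …, X_n` (`n ≥ 1`) are `X 0, …, X (n + 1)` here. -/
theorem pbw_highest_order_terms_general
    {A L U : Type*} [CommRing A]
    [LieRing L] [Ring U] [Algebra ℚ U]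
    (ι : A →+* U) (j : L → U) (ρ : L → A → A) (nab : L → L → L)
    (hj_add : ∀ X Y : L, j (X + Y) = j X + j Y)
    (hcomm : ∀ (X : L) (a : A), j X * ι a = ι a * j X + ι (ρ X a))
    (hbr : ∀ X Y : L, j X * j Y - j Y * j X = j ⁅X, Y⁆)
    -- the connection `∇` is torsion-free
    (htf : ∀ X Y : L, nab X Y - nab Y X = ⁅X, Y⁆)
    (n : ℕ) (X : Fin (n + 2) → L) :
    EMap j nab (n + 2) X -
        ((List.ofFn fun i => j (X i)).prod -
          ∑ k : Fin (n + 2), ∑ jj ∈ Finset.univ.filter (fun t : Fin (n + 2) => t < k),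
            (((List.ofFn fun i => j (X i)).eraseIdx (k : ℕ)).eraseIdx (jj : ℕ)).prod *
              j (nab (X jj) (X k)))
      ∈ Ufil ι j n := by
  simp only [PBW.prod_ofFn_eq_word, PBW.prod_eraseIdx_eraseIdx_ofFn, ← PBW.connectionTerm_eq_sum]
  exact SModEq.sub_mem.mp (PBW.EMap_smodEq ι j nab hj_add hcomm hbr htf n X)

/-- Highest order terms of the formal exponential map.  With `n + 2` factors
`X_0,…,X_{n+1}` (so at least two), the congruence holds modulo `U^{≤ n}(L)`,
which is `U^{≤ (number of factors) − 2}(L)`, matching the paper's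
`pbw(X_0⊙⋯⊙X_n) ≡ X_0⋯X_n − Σ_{j<k} ⋯ mod U^{≤ n−1}` for `n ≥ 1`. -/
theorem pbw_highest_order_terms
    {A L U : Type*} [CommRing A] [Algebra ℚ A]
    [LieRing L] [Module A L] [Ring U] [Algebra ℚ U]
    (ι : A →+* U) (j : L → U) (ρ : L → A → A) (nab : L → L → L)
    (hj_add : ∀ X Y : L, j (X + Y) = j X + j Y)
    (hj_smul : ∀ (a : A) (X : L), j (a • X) = ι a * j X)
    (hρ_der : ∀ (X : L) (a b : A), ρ X (a * b) = a * ρ X b + b * ρ X a)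
    (hcomm : ∀ (X : L) (a : A), j X * ι a = ι a * j X + ι (ρ X a))
    (hbr : ∀ X Y : L, j X * j Y - j Y * j X = j ⁅X, Y⁆)
    (hnab_smul₁ : ∀ (a : A) (X Y : L), nab (a • X) Y = a • nab X Y)
    (hnab_smul₂ : ∀ (a : A) (X Y : L), nab X (a • Y) = ρ X a • Y + a • nab X Y)
    -- the connection `∇` is torsion-free
    (htf : ∀ X Y : L, nab X Y - nab Y X = ⁅X, Y⁆)
    (n : ℕ) (X : Fin (n + 2) → L) :
    EMap j nab (n + 2) X -
        ((List.ofFn fun i => j (X i)).prod -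
          ∑ k : Fin (n + 2), ∑ jj ∈ Finset.univ.filter (fun t : Fin (n + 2) => t < k),
            (((List.ofFn fun i => j (X i)).eraseIdx (k : ℕ)).eraseIdx (jj : ℕ)).prod *
              j (nab (X jj) (X k)))
      ∈ Ufil ι j n :=
  pbw_highest_order_terms_general ι j ρ nab hj_add hcomm hbr htf n X
end
end

section
/- The formal exponential map pbw : S_A(L) → U(L) is a morphism of coalgebras over A: Δ ∘ pbw = (pbw ⊗ pbw) ∘ Δ, where Δ on U(L) is the standard comultiplication determined by Δ(1)=1⊗1, Δ(X)=1⊗X+X⊗1 for X ∈ L, and multiplicativity, and Δ on S_A(L) is the shuffle comultiplication Δ(X_1⊙⋯⊙X_k) = Σ over (p,q)-shuffles of (X_{σ(1)}⊙⋯⊙X_{σ(p)}) ⊗ (X_{σ(p+1)}⊙⋯⊙X_{σ(k)}). -/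
/-! STATEMENT 9: the formal exponential map `pbw : S_A(L) → U(L)` is a morphism
of coalgebras over `A`: `Δ ∘ pbw = (pbw ⊗ pbw) ∘ Δ`. -/

noncomputable section

open scoped TensorProduct

/-- The ordered product of the `j(X_i)`, `i ∈ s`, in `U`. -/
def UProdOn {L U : Type*} [Ring U] (j : L → U) {n : ℕ} (X : Fin n → L)
    (s : Finset (Fin n)) : U :=
  ((s.sort (· ≤ ·)).map fun i => j (X i)).prod

/-- The symmetric monomial `⨀_{i ∈ s} X_i` in `S_A(L)`. -/
def SProdOn (A : Type*) {L : Type*} [CommRing A] [AddCommGroup L] [Module A L]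
    {n : ℕ} (X : Fin n → L) (s : Finset (Fin n)) : SymmAlgebra A L :=
  ((s.sort (· ≤ ·)).map fun i => ιSym A L (X i)).prod

/-! Both sides are `A`-linear and `S_A(L)` is spanned by monomials, so it suffices to show
`Δ(E(X)) = Σ_s E(X_s) ⊗ E(X_{sᶜ})`, where `E(X_s)` is `pbw` of the sub-monomial indexed by `s`.
This is proved in the stronger form
`Δ(j(Y₁)⋯j(Y_m) · E(Z_{s₀})) = Σ_{t,s} (Y_t E(Z_s)) ⊗ (Y_{tᶜ} E(Z_{s₀∖s}))`
by induction on `|s₀|`. After multiplying by `|s₀|`, the recursion defining `pbw` rewrites the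
left side through shorter instances (the factor `j(Z_k)` joins the word `Y`), while on the right
`|s₀| = |s| + |s₀ ∖ s|` lets the same recursion act on either tensor factor; the two expansions
agree after reindexing. Since `ℚ ⊆ A`, the factor `|s₀|` cancels in `U ⊗_A U`. -/

open Finset

section Reindex
variable {α M : Type*} [DecidableEq α] [AddCommMonoid M]

lemma Finset.sum_powerset_sum_sdiff (s₀ : Finset α) (f : α → Finset α → M) :
    ∑ s ∈ s₀.powerset, ∑ k ∈ s₀ \ s, f k s = ∑ k ∈ s₀, ∑ s ∈ (s₀.erase k).powerset, f k s :=
  sum_comm' fun s k => by simp only [mem_powerset, mem_sdiff, subset_erase]; tauto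

lemma Finset.sum_powerset_sum_mem (s₀ : Finset α) (f : α → Finset α → M) :
    ∑ s ∈ s₀.powerset, ∑ k ∈ s, f k s =
      ∑ k ∈ s₀, ∑ s ∈ (s₀.erase k).powerset, f k (insert k s) := by
  rw [sum_comm' (t' := s₀) (s' := fun k => (s₀.erase k).powerset.image (insert k))]
  · refine sum_congr rfl fun k _ => sum_image fun a ha b hb h => ?_
    simp only [coe_powerset, Set.mem_preimage, Set.mem_powerset_iff, coe_subset,
      subset_erase] at ha hb
    rw [← erase_insert ha.2, h, erase_insert hb.2]
  · intro s k
    simp only [mem_powerset, mem_image, subset_erase]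
    constructor
    · rintro ⟨hs, hk⟩
      exact ⟨⟨s.erase k, ⟨(erase_subset k s).trans hs, notMem_erase k s⟩, insert_erase hk⟩, hs hk⟩
    · rintro ⟨⟨t, ⟨ht, -⟩, rfl⟩, hk⟩
      exact ⟨insert_subset hk ht, mem_insert_self k t⟩

end Reindex

lemma Finset.sum_eq_sum_comp_of_strictMono {α M : Type*} [LinearOrder α] [AddCommMonoid M]
    {s : Finset α} {n : ℕ} (h : #s = n) {g : Fin n → α} (hgs : ∀ i, g i ∈ s) (hg : StrictMono g)
    (f : α → M) : ∑ x ∈ s, f x = ∑ i, f (g i) := by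
  rw [orderEmbOfFin_unique h hgs hg]
  conv_lhs => rw [← map_orderEmbOfFin_univ s h]
  exact sum_map _ _ f

section FinSnoc
variable {m : ℕ}

lemma Finset.sort_map_castSuccEmb (t : Finset (Fin m)) :
    (t.map Fin.castSuccEmb).sort (· ≤ ·) = (t.sort (· ≤ ·)).map Fin.castSucc :=
  (Multiset.map_sort Fin.castSucc t.val (· ≤ ·) (· ≤ ·)
    fun _ _ _ _ => Fin.castSucc_le_castSucc_iff.symm).symm

lemma Finset.sort_insert_last_map_castSuccEmb (t : Finset (Fin m)) :
    (insert (Fin.last m) (t.map Fin.castSuccEmb)).sort (· ≤ ·) =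
      (t.sort (· ≤ ·)).map Fin.castSucc ++ [Fin.last m] := by
  refine List.Pairwise.eq_of_mem_iff (r := (· < ·)) (sortedLT_sort _).pairwise ?_ ?_
  · simp only [List.pairwise_append, List.pairwise_map, List.pairwise_singleton, List.mem_map,
      List.mem_singleton, true_and]
    refine ⟨(sortedLT_sort t).pairwise.imp Fin.castSucc_lt_castSucc_iff.mpr, ?_⟩
    rintro _ ⟨i, -, rfl⟩ _ rfl
    exact Fin.castSucc_lt_last i
  · simp [or_comm]

lemma Finset.compl_map_castSuccEmb (t : Finset (Fin m)) :
    (t.map Fin.castSuccEmb)ᶜ = insert (Fin.last m) (tᶜ.map Fin.castSuccEmb) := by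
  ext x
  induction x using Fin.lastCases with
  | last => simp
  | cast y => simp [Fin.castSucc_ne_last]

lemma Finset.compl_insert_last_map_castSuccEmb (t : Finset (Fin m)) :
    (insert (Fin.last m) (t.map Fin.castSuccEmb))ᶜ = tᶜ.map Fin.castSuccEmb := by
  rw [compl_insert, compl_map_castSuccEmb, erase_insert (by simp)]

lemma Finset.sum_finset_fin_succ {M : Type*} [AddCommMonoid M] (f : Finset (Fin (m + 1)) → M) :
    ∑ t, f t = ∑ t : Finset (Fin m),
      (f (t.map Fin.castSuccEmb) + f (insert (Fin.last m) (t.map Fin.castSuccEmb))) := by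
  have huniv : (univ : Finset (Fin (m + 1))) = insert (Fin.last m) (univ.map Fin.castSuccEmb) := by
    rw [Fin.univ_castSuccEmb, cons_eq_insert]
  rw [← powerset_univ, huniv, sum_powerset_insert (by simp), ← sum_add_distrib]
  simp only [map_eq_image, powerset_image]
  exact sum_image fun a _ b _ h => image_injective (Fin.castSucc_injective m) h

variable {L U : Type*} [Ring U] (j : L → U)

lemma UProdOn_snoc_map_castSuccEmb (Y : Fin m → L) (w : L) (t : Finset (Fin m)) :
    UProdOn j (Fin.snoc Y w) (t.map Fin.castSuccEmb) = UProdOn j Y t := by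
  simp [UProdOn, sort_map_castSuccEmb, Function.comp_def]

lemma UProdOn_snoc_insert_last (Y : Fin m → L) (w : L) (t : Finset (Fin m)) :
    UProdOn j (Fin.snoc Y w) (insert (Fin.last m) (t.map Fin.castSuccEmb)) =
      UProdOn j Y t * j w := by
  simp [UProdOn, sort_insert_last_map_castSuccEmb, Function.comp_def]

lemma sum_UProdOn_snoc {M : Type*} [AddCommMonoid M] (f : U → U → M) (Y : Fin m → L) (w : L) :
    ∑ t, f (UProdOn j (Fin.snoc Y w) t) (UProdOn j (Fin.snoc Y w) tᶜ) =
      ∑ t, (f (UProdOn j Y t) (UProdOn j Y tᶜ * j w) +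
        f (UProdOn j Y t * j w) (UProdOn j Y tᶜ)) := by
  simp only [sum_finset_fin_succ, compl_map_castSuccEmb, compl_insert_last_map_castSuccEmb,
    UProdOn_snoc_map_castSuccEmb, UProdOn_snoc_insert_last]

lemma prod_ofFn_snoc (Y : Fin m → L) (w : L) :
    (List.ofFn fun i => j ((Fin.snoc Y w : Fin (m + 1) → L) i)).prod =
      (List.ofFn fun i => j (Y i)).prod * j w := by
  rw [List.ofFn_succ', List.concat_eq_append, List.prod_append]
  simp

end FinSnoc

section EMapOn
variable {L U : Type*} [Ring U] [Algebra ℚ U] (j : L → U) (nab : L → L → L)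

lemma succ_nsmul_EMap (n : ℕ) (X : Fin (n + 1) → L) :
    (n + 1) • EMap j nab (n + 1) X =
      (∑ k, j (X k) * EMap j nab n (X ∘ k.succAbove)) -
        ∑ k, ∑ m : Fin n,
          EMap j nab n (Function.update (X ∘ k.succAbove) m (nab (X k) (X (k.succAbove m)))) := by
  rw [EMap, ← Nat.cast_smul_eq_nsmul ℚ, smul_smul, Nat.cast_succ,
    mul_inv_cancel₀ (Nat.cast_add_one_ne_zero n), one_smul]

def EMapOn {N : ℕ} (Z : Fin N → L) (s : Finset (Fin N)) : U :=
  EMap j nab #s (Z ∘ s.orderEmbOfFin rfl)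

variable {N : ℕ}

lemma EMapOn_eq_EMap_comp (Z : Fin N → L) {s : Finset (Fin N)} {n : ℕ} (h : #s = n)
    {g : Fin n → Fin N} (hgs : ∀ i, g i ∈ s) (hg : StrictMono g) :
    EMapOn j nab Z s = EMap j nab n (Z ∘ g) := by
  subst h
  rw [orderEmbOfFin_unique rfl hgs hg]
  rfl

lemma EMapOn_empty (Z : Fin N → L) : EMapOn j nab Z ∅ = 1 := rfl

lemma EMapOn_univ (Z : Fin N → L) : EMapOn j nab Z univ = EMap j nab N Z :=
  EMapOn_eq_EMap_comp j nab Z (card_fin N) (fun i => mem_univ i) strictMono_id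

lemma EMapOn_update_of_notMem (Z : Fin N → L) {s : Finset (Fin N)} {m : Fin N} (hm : m ∉ s)
    (v : L) : EMapOn j nab (Function.update Z m v) s = EMapOn j nab Z s := by
  unfold EMapOn
  congr 1
  funext i
  exact Function.update_of_ne (ne_of_mem_of_not_mem (s.orderEmbOfFin_mem rfl i) hm) v Z

lemma card_nsmul_EMapOn (Z : Fin N → L) (s : Finset (Fin N)) :
    #s • EMapOn j nab Z s =
      (∑ k ∈ s, j (Z k) * EMapOn j nab Z (s.erase k)) -
        ∑ k ∈ s, ∑ m ∈ s.erase k,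
          EMapOn j nab (Function.update Z m (nab (Z k) (Z m))) (s.erase k) := by
  rcases s.eq_empty_or_nonempty with rfl | hne
  · simp
  obtain ⟨n, hs⟩ := Nat.exists_eq_add_one.mpr hne.card_pos
  set e := s.orderEmbOfFin hs
  have he : ∀ i, e i ∈ s := s.orderEmbOfFin_mem hs
  have hcard : ∀ k, #(s.erase (e k)) = n := fun k => by
    rw [card_erase_of_mem (he k), hs, Nat.add_sub_cancel]
  have hmem : ∀ k i, e (k.succAbove i) ∈ s.erase (e k) := fun k i =>
    mem_erase.mpr ⟨fun h => k.succAbove_ne i (e.injective h), he _⟩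
  have hmono : ∀ k : Fin (n + 1), StrictMono (e ∘ k.succAbove) := fun k =>
    e.strictMono.comp k.strictMono_succAbove
  have hErase : ∀ k (Z' : Fin N → L),
      EMapOn j nab Z' (s.erase (e k)) = EMap j nab n (Z' ∘ e ∘ k.succAbove) := fun k Z' =>
    EMapOn_eq_EMap_comp j nab Z' (hcard k) (hmem k) (hmono k)
  rw [EMapOn_eq_EMap_comp j nab Z hs he e.strictMono, hs, succ_nsmul_EMap,
    sum_eq_sum_comp_of_strictMono hs he e.strictMono,
    sum_eq_sum_comp_of_strictMono hs he e.strictMono]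
  congr 1
  · simp only [hErase]
    rfl
  · refine sum_congr rfl fun k _ => ?_
    rw [sum_eq_sum_comp_of_strictMono (hcard k) (hmem k) (hmono k)]
    refine sum_congr rfl fun i _ => ?_
    rw [hErase]
    exact congrArg _ (Function.update_comp_eq_of_injective Z
      (e.injective.comp k.succAbove_right_injective) i _).symm

end EMapOn

section Shuffle
variable {L U W : Type*} [Ring U] [Algebra ℚ U] [AddCommGroup W] (j : L → U) (nab : L → L → L)
  (B : U →+ U →+ W) {N : ℕ} (Z : Fin N → L) (s₀ : Finset (Fin N))

lemma sum_powerset_map_card_sdiff_nsmul_EMapOn :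
    ∑ s ∈ s₀.powerset, B (EMapOn j nab Z s) (#(s₀ \ s) • EMapOn j nab Z (s₀ \ s)) =
      (∑ k ∈ s₀, ∑ s ∈ (s₀.erase k).powerset,
          B (EMapOn j nab Z s) (j (Z k) * EMapOn j nab Z (s₀.erase k \ s))) -
        ∑ k ∈ s₀, ∑ s ∈ (s₀.erase k).powerset, ∑ m ∈ s₀.erase k \ s,
          B (EMapOn j nab (Function.update Z m (nab (Z k) (Z m))) s)
            (EMapOn j nab (Function.update Z m (nab (Z k) (Z m))) (s₀.erase k \ s)) := by
  simp only [card_nsmul_EMapOn, map_sub, map_sum, sum_sub_distrib]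
  rw [sum_powerset_sum_sdiff, sum_powerset_sum_sdiff]
  simp only [← erase_sdiff_comm]
  congr 1
  refine sum_congr rfl fun k _ => sum_congr rfl fun s _ => sum_congr rfl fun m hm => ?_
  rw [EMapOn_update_of_notMem j nab Z (mem_sdiff.mp hm).2]

lemma sum_powerset_map_card_nsmul_EMapOn :
    ∑ s ∈ s₀.powerset, B (#s • EMapOn j nab Z s) (EMapOn j nab Z (s₀ \ s)) =
      (∑ k ∈ s₀, ∑ s ∈ (s₀.erase k).powerset,
          B (j (Z k) * EMapOn j nab Z s) (EMapOn j nab Z (s₀.erase k \ s))) -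
        ∑ k ∈ s₀, ∑ s ∈ (s₀.erase k).powerset, ∑ m ∈ s,
          B (EMapOn j nab (Function.update Z m (nab (Z k) (Z m))) s)
            (EMapOn j nab (Function.update Z m (nab (Z k) (Z m))) (s₀.erase k \ s)) := by
  simp only [card_nsmul_EMapOn, map_sub, AddMonoidHom.sub_apply, map_sum,
    AddMonoidHom.finsetSum_apply, sum_sub_distrib]
  rw [sum_powerset_sum_mem, sum_powerset_sum_mem]
  have hk : ∀ k, ∀ s ∈ (s₀.erase k).powerset, k ∉ s := fun k s hs =>
    notMem_of_mem_powerset_of_notMem hs (notMem_erase k s₀)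
  congr 1
  · refine sum_congr rfl fun k _ => sum_congr rfl fun s hs => ?_
    rw [erase_insert (hk k s hs), sdiff_insert, erase_sdiff_comm]
  · refine sum_congr rfl fun k _ => sum_congr rfl fun s hs => ?_
    rw [erase_insert (hk k s hs), sdiff_insert, erase_sdiff_comm]
    refine sum_congr rfl fun m hm => ?_
    rw [EMapOn_update_of_notMem j nab Z (s := (s₀ \ s).erase k) (by simp [hm])]

lemma card_nsmul_sum_powerset_EMapOn :
    #s₀ • ∑ s ∈ s₀.powerset, B (EMapOn j nab Z s) (EMapOn j nab Z (s₀ \ s)) =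
      (∑ k ∈ s₀, ∑ s ∈ (s₀.erase k).powerset,
          (B (EMapOn j nab Z s) (j (Z k) * EMapOn j nab Z (s₀.erase k \ s)) +
            B (j (Z k) * EMapOn j nab Z s) (EMapOn j nab Z (s₀.erase k \ s)))) -
        ∑ k ∈ s₀, ∑ m ∈ s₀.erase k, ∑ s ∈ (s₀.erase k).powerset,
          B (EMapOn j nab (Function.update Z m (nab (Z k) (Z m))) s)
            (EMapOn j nab (Function.update Z m (nab (Z k) (Z m))) (s₀.erase k \ s)) := by
  have hsplit : ∀ s ∈ s₀.powerset, #s₀ • B (EMapOn j nab Z s) (EMapOn j nab Z (s₀ \ s)) =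
      B (EMapOn j nab Z s) (#(s₀ \ s) • EMapOn j nab Z (s₀ \ s)) +
        B (#s • EMapOn j nab Z s) (EMapOn j nab Z (s₀ \ s)) := fun s hs => by
    rw [← card_sdiff_add_card_eq_card (mem_powerset.mp hs), add_nsmul, map_nsmul, map_nsmul,
      AddMonoidHom.nsmul_apply]
  rw [smul_sum, sum_congr rfl hsplit, sum_add_distrib,
    sum_powerset_map_card_sdiff_nsmul_EMapOn, sum_powerset_map_card_nsmul_EMapOn,
    sub_add_sub_comm, ← sum_add_distrib, ← sum_add_distrib]
  congr 1
  · exact sum_congr rfl fun k _ => sum_add_distrib.symm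
  · refine sum_congr rfl fun k _ => ?_
    rw [← sum_add_distrib]
    exact (sum_congr rfl fun s hs => sum_sdiff (mem_powerset.mp hs)).trans sum_comm

end Shuffle

lemma isAddTorsionFree_of_algebra_rat (A M : Type*) [Semiring A] [Algebra ℚ A] [AddCommMonoid M]
    [Module A M] : IsAddTorsionFree M where
  nsmul_right_injective n hn x y h := by
    have hinv : ∀ z : M, algebraMap ℚ A (n : ℚ)⁻¹ • n • z = z := fun z => by
      rw [← Nat.cast_smul_eq_nsmul A, smul_smul, ← map_natCast (algebraMap ℚ A), ← map_mul,
        inv_mul_cancel₀ (Nat.cast_ne_zero.mpr hn), map_one, one_smul]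
    rw [← hinv x, ← hinv y]
    exact congrArg _ h

section Coproduct
variable {A L U : Type*} [CommRing A] [Ring U] [Module A U]

def mulLeftTmul (a b : U) : U →+ U →+ U ⊗[A] U :=
  ((LinearMap.toAddMonoidHom'.comp (TensorProduct.mk A U U).toAddMonoidHom).comp
    (AddMonoidHom.mulLeft a)).compl₂ (AddMonoidHom.mulLeft b)

@[simp]
lemma mulLeftTmul_apply (a b x y : U) : mulLeftTmul (A := A) a b x y = (a * x) ⊗ₜ[A] (b * y) :=
  rfl

variable [Algebra ℚ A] [Algebra ℚ U] (j : L → U) (nab : L → L → L) (ΔU : U →ₗ[A] U ⊗[A] U)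

theorem map_prod_mul_EMapOn
    (hΔUprod : ∀ (n : ℕ) (X : Fin n → L),
        ΔU ((List.ofFn fun i => j (X i)).prod) =
          ∑ s : Finset (Fin n), UProdOn j X s ⊗ₜ[A] UProdOn j X sᶜ)
    {m N : ℕ} (Y : Fin m → L) (Z : Fin N → L) (s₀ : Finset (Fin N)) :
    ΔU ((List.ofFn fun i => j (Y i)).prod * EMapOn j nab Z s₀) =
      ∑ t, ∑ s ∈ s₀.powerset,
        (UProdOn j Y t * EMapOn j nab Z s) ⊗ₜ[A] (UProdOn j Y tᶜ * EMapOn j nab Z (s₀ \ s)) := by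
  obtain ⟨n, hn⟩ : ∃ n, #s₀ = n := ⟨_, rfl⟩
  induction n generalizing m Y Z s₀ with
  | zero =>
    rw [card_eq_zero.mp hn, EMapOn_empty, mul_one, hΔUprod, powerset_empty]
    simp [EMapOn_empty]
  | succ n ih =>
    have := isAddTorsionFree_of_algebra_rat A (U ⊗[A] U)
    have hcard : ∀ k ∈ s₀, #(s₀.erase k) = n := fun k hk => by
      rw [card_erase_of_mem hk, hn, Nat.add_sub_cancel]
    apply nsmul_right_injective (n := #s₀) (by omega)
    dsimp only
    rw [← map_nsmul, ← mul_smul_comm, smul_sum, card_nsmul_EMapOn]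
    have hR := fun t => card_nsmul_sum_powerset_EMapOn j nab
      (mulLeftTmul (A := A) (UProdOn j Y t) (UProdOn j Y tᶜ)) Z s₀
    simp only [mulLeftTmul_apply] at hR
    rw [sum_congr rfl fun t _ => hR t]
    simp only [mul_sub, map_sub, mul_sum, map_sum, sum_sub_distrib]
    congr 1
    · refine Eq.trans ?_ sum_comm.symm
      refine sum_congr rfl fun k hk => ?_
      rw [← mul_assoc, ← prod_ofFn_snoc, ih _ _ _ (hcard k hk), sum_UProdOn_snoc j
        (fun a b => ∑ s ∈ (s₀.erase k).powerset,
          (a * EMapOn j nab Z s) ⊗ₜ[A] (b * EMapOn j nab Z (s₀.erase k \ s)))]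
      simp only [sum_add_distrib, mul_assoc]
    · refine Eq.trans ?_ sum_comm.symm
      refine sum_congr rfl fun k hk => Eq.trans ?_ sum_comm.symm
      exact sum_congr rfl fun m _ => ih _ _ _ (hcard k hk)

theorem map_EMapOn
    (hΔUprod : ∀ (n : ℕ) (X : Fin n → L),
        ΔU ((List.ofFn fun i => j (X i)).prod) =
          ∑ s : Finset (Fin n), UProdOn j X s ⊗ₜ[A] UProdOn j X sᶜ)
    {N : ℕ} (Z : Fin N → L) (s₀ : Finset (Fin N)) :
    ΔU (EMapOn j nab Z s₀) =
      ∑ s ∈ s₀.powerset, EMapOn j nab Z s ⊗ₜ[A] EMapOn j nab Z (s₀ \ s) := by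
  have hempty : ∀ t : Finset (Fin 0), UProdOn j Fin.elim0 t = 1 := fun t => by
    rw [Subsingleton.elim t ∅, UProdOn, sort_empty, List.map_nil, List.prod_nil]
  simpa [hempty] using map_prod_mul_EMapOn j nab ΔU hΔUprod Fin.elim0 Z s₀

end Coproduct

section SymmAlgebra
variable (A L : Type*) [CommRing A] [AddCommGroup L] [Module A L]

lemma symMonomial_append {p q : ℕ} (Xp : Fin p → L) (Xq : Fin q → L) :
    symMonomial A (p + q) (Fin.append Xp Xq) = symMonomial A p Xp * symMonomial A q Xq := by
  simp [symMonomial, List.ofFn_add]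

lemma span_symMonomial :
    Submodule.span A {x : SymmAlgebra A L | ∃ n X, symMonomial A n X = x} = ⊤ := by
  let monomials : Submonoid (SymmAlgebra A L) :=
    { carrier := {x | ∃ n X, symMonomial A n X = x}
      one_mem' := ⟨0, Fin.elim0, rfl⟩
      mul_mem' := by
        rintro _ _ ⟨p, Xp, rfl⟩ ⟨q, Xq, rfl⟩
        exact ⟨p + q, Fin.append Xp Xq, symMonomial_append A L Xp Xq⟩ }
  have hadjoin : Algebra.adjoin A (Set.range (ιSym A L)) = ⊤ := by
    rw [ιSym, LinearMap.coe_comp, Set.range_comp, AlgHom.coe_toLinearMap, Algebra.adjoin_image,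
      TensorAlgebra.adjoin_range_ι, Algebra.map_top, AlgHom.range_eq_top]
    exact RingQuot.mkAlgHom_surjective A (SymRel A L)
  have hclosure : Submonoid.closure (Set.range (ιSym A L)) ≤ monomials :=
    Submonoid.closure_le.mpr <| Set.range_subset_iff.mpr fun x =>
      ⟨1, fun _ => x, by simp [symMonomial]⟩
  rw [eq_top_iff, ← Algebra.top_toSubmodule, ← hadjoin, Algebra.adjoin_eq_span]
  exact Submodule.span_mono hclosure

lemma SProdOn_eq_symMonomial {n : ℕ} (X : Fin n → L) (s : Finset (Fin n)) :
    SProdOn A X s = symMonomial A #s (X ∘ s.orderEmbOfFin rfl) := by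
  rw [SProdOn, symMonomial, ← listMap_orderEmbOfFin_finRange s rfl, List.map_map,
    List.ofFn_eq_map]
  rfl

end SymmAlgebra

theorem pbw_coalgebra_morphism_general
    {A L U : Type*} [CommRing A] [Algebra ℚ A]
    [AddCommGroup L] [Module A L]
    [Ring U] [Algebra ℚ U] [Module A U]
    (j : L → U) (nab : L → L → L)
    (pbw : SymmAlgebra A L →ₗ[A] U)
    (hpbw : ∀ (n : ℕ) (X : Fin n → L), pbw (symMonomial A n X) = EMap j nab n X)
    -- the comultiplication on `U(L)`: `Δ(1) = 1⊗1`, `Δ(X) = 1⊗X + X⊗1`, and the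
    -- induced shuffle formula on monomials
    (ΔU : U →ₗ[A] U ⊗[A] U)
    (hΔUprod : ∀ (n : ℕ) (X : Fin n → L),
        ΔU ((List.ofFn fun i => j (X i)).prod) =
          ∑ s : Finset (Fin n), UProdOn j X s ⊗ₜ[A] UProdOn j X sᶜ)
    -- the shuffle comultiplication on `S_A(L)`
    (ΔS : SymmAlgebra A L →ₗ[A] SymmAlgebra A L ⊗[A] SymmAlgebra A L)
    (hΔSprod : ∀ (n : ℕ) (X : Fin n → L),
        ΔS (symMonomial A n X) =
          ∑ s : Finset (Fin n), SProdOn A X s ⊗ₜ[A] SProdOn A X sᶜ) :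
    ΔU.comp pbw = (TensorProduct.map pbw pbw).comp ΔS := by
  refine LinearMap.ext_on (span_symMonomial A L) ?_
  rintro _ ⟨n, X, rfl⟩
  have hpbwOn : ∀ s, pbw (SProdOn A X s) = EMapOn j nab X s := fun s => by
    rw [SProdOn_eq_symMonomial, hpbw]
    rfl
  simp only [LinearMap.comp_apply, hpbw, hΔSprod, map_sum, TensorProduct.map_tmul, hpbwOn,
    ← EMapOn_univ, map_EMapOn j nab ΔU hΔUprod, powerset_univ, compl_eq_univ_sdiff]

theorem pbw_coalgebra_morphism
    {A L U : Type*} [CommRing A] [Algebra ℚ A]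
    [AddCommGroup L] [Module A L]
    [Ring U] [Algebra ℚ U] [Module A U]
    (ι : A →+* U) (j : L → U) (ρ : L → A → A) (nab : L → L → L)
    (hAU : ∀ (a : A) (u : U), a • u = ι a * u)
    (hj_add : ∀ X Y : L, j (X + Y) = j X + j Y)
    (hj_smul : ∀ (a : A) (X : L), j (a • X) = ι a * j X)
    (hcomm : ∀ (X : L) (a : A), j X * ι a = ι a * j X + ι (ρ X a))
    (pbw : SymmAlgebra A L →ₗ[A] U)
    (hpbw : ∀ (n : ℕ) (X : Fin n → L), pbw (symMonomial A n X) = EMap j nab n X)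
    -- the comultiplication on `U(L)`: `Δ(1) = 1⊗1`, `Δ(X) = 1⊗X + X⊗1`, and the
    -- induced shuffle formula on monomials
    (ΔU : U →ₗ[A] U ⊗[A] U)
    (hΔU1 : ΔU 1 = 1 ⊗ₜ[A] 1)
    (hΔUX : ∀ X : L, ΔU (j X) = 1 ⊗ₜ[A] j X + j X ⊗ₜ[A] 1)
    (hΔUprod : ∀ (n : ℕ) (X : Fin n → L),
        ΔU ((List.ofFn fun i => j (X i)).prod) =
          ∑ s : Finset (Fin n), UProdOn j X s ⊗ₜ[A] UProdOn j X sᶜ)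
    -- the shuffle comultiplication on `S_A(L)`
    (ΔS : SymmAlgebra A L →ₗ[A] SymmAlgebra A L ⊗[A] SymmAlgebra A L)
    (hΔSprod : ∀ (n : ℕ) (X : Fin n → L),
        ΔS (symMonomial A n X) =
          ∑ s : Finset (Fin n), SProdOn A X s ⊗ₜ[A] SProdOn A X sᶜ) :
    ΔU.comp pbw = (TensorProduct.map pbw pbw).comp ΔS :=
  pbw_coalgebra_morphism_general j nab pbw hpbw ΔU hΔUprod ΔS hΔSprod

end
end

section
/- Assume ∇ is torsion-free. For all n ≥ 1 and X_0,…,X_n ∈ L, the induced flat connection ∇' satisfies ∇'_{X_0}(X_1⊙⋯⊙X_n) ≡ X_0⊙X_1⊙⋯⊙X_n + ∇_{X_0}(X_1⊙⋯⊙X_n) modulo S^{≤ n−1}(L), where ∇_{X_0} acts on S^n(L) as a derivation. -/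
/-!
Write `E = pbw ∘ symMonomial` for the formal exponential and
`D(Y; Z) = j Y · E(Z) - E(Y ⊙ Z) - ∑ₚ E(Z with Zₚ replaced by ∇_Y Zₚ)` (`EMap.defect`); the theorem
says `D(X₀; X) ∈ pbw (S^{≤ n})`. Unfolding the recursion defining `E` and using its symmetry gives
`∑ₖ D(Xₖ; X without Xₖ) = 0`. For `Y ⊙ Z` with `Z` of length `k + 1`, since `D(Y; Z)` is symmetric
in `Z`, this reads `(k + 2) D(Y; Z) = ∑ᵢ (D(Y; Zᵢ ⊙ Wᵢ) - D(Zᵢ; Y ⊙ Wᵢ))` with `Wᵢ = Z without Zᵢ`.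
The antisymmetrised defects lie in degree `k`: their top-order parts cancel because
`[j Y, j X] = j ⁅Y, X⁆` and `∇_Y X - ∇_X Y = ⁅Y, X⁆`. A strong induction on the length, carrying along
that `j Y · pbw (S^{≤ n}) ⊆ pbw (S^{≤ n + 1})`, concludes.
-/

noncomputable section

def Sfil (A L : Type*) [CommRing A] [AddCommGroup L] [Module A L] (n : ℕ) :
    Submodule A (SymmAlgebra A L) :=
  Submodule.span A
    {x | ∃ m ≤ n, ∃ X : Fin m → L, x = symMonomial A m X}

namespace SymmAlgebra

variable {A L : Type*} [CommRing A] [AddCommGroup L] [Module A L]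

protected theorem mul_comm (x y : SymmAlgebra A L) : x * y = y * x := by
  change Commute x y
  obtain ⟨p, rfl⟩ := RingQuot.mkAlgHom_surjective A (SymRel A L) x
  obtain ⟨q, rfl⟩ := RingQuot.mkAlgHom_surjective A (SymRel A L) y
  induction q using TensorAlgebra.induction with
  | algebraMap r => rw [AlgHom.commutes]; exact Algebra.commute_algebraMap_right _ _
  | ι w =>
    induction p using TensorAlgebra.induction with
    | algebraMap r => rw [AlgHom.commutes]; exact Algebra.commute_algebraMap_left _ _
    | ι v =>
      simpa [map_mul, commute_iff_eq] using RingQuot.mkAlgHom_rel A (SymRel.mk (A := A) v w)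
    | mul a b ha hb => rw [map_mul]; exact ha.mul_left hb
    | add a b ha hb => rw [map_add]; exact ha.add_left hb
  | mul b c hb hc => rw [map_mul]; exact hb.mul_right hc
  | add b c hb hc => rw [map_add]; exact hb.add_right hc

instance : CommRing (SymmAlgebra A L) :=
  { (inferInstance : Ring (SymmAlgebra A L)) with mul_comm := SymmAlgebra.mul_comm }

end SymmAlgebra

section SymMonomial

variable {A L : Type*} [CommRing A] [AddCommGroup L] [Module A L]

theorem symMonomial_eq_prod {m : ℕ} (X : Fin m → L) :
    symMonomial A m X = ∏ i, ιSym A L (X i) :=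
  List.prod_ofFn

theorem symMonomial_cons {m : ℕ} (Y : L) (X : Fin m → L) :
    symMonomial A (m + 1) (Fin.cons Y X) = ιSym A L Y * symMonomial A m X := by
  simp only [symMonomial_eq_prod, Fin.prod_univ_succ, Fin.cons_zero, Fin.cons_succ]

theorem symMonomial_comp_perm {m : ℕ} (X : Fin m → L) (σ : Equiv.Perm (Fin m)) :
    symMonomial A m (X ∘ σ) = symMonomial A m X := by
  simp only [symMonomial_eq_prod]
  exact Equiv.prod_comp σ fun i => ιSym A L (X i)

theorem Sfil_mono {m n : ℕ} (h : m ≤ n) : Sfil A L m ≤ Sfil A L n :=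
  Submodule.span_mono fun _ ⟨q, hq, X, hX⟩ => ⟨q, hq.trans h, X, hX⟩

end SymMonomial

theorem Fin.cons_self_comp_succAbove {α : Type*} {m : ℕ} (X : Fin (m + 1) → α) (i : Fin (m + 1)) :
    Fin.cons (X i) (X ∘ i.succAbove) = X ∘ i.cycleRange.symm := by
  funext p
  cases p using Fin.cases <;> simp

namespace EMap

variable {L U : Type*} [Ring U] [Algebra ℚ U] (j : L → U) (nab : L → L → L)

def defect {m : ℕ} (Y : L) (Z : Fin m → L) : U :=
  j Y * EMap j nab m Z - EMap j nab (m + 1) (Fin.cons Y Z) -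
    ∑ p, EMap j nab m (Function.update Z p (nab Y (Z p)))

theorem j_mul_eq {m : ℕ} (Y : L) (Z : Fin m → L) :
    j Y * EMap j nab m Z = defect j nab Y Z + EMap j nab (m + 1) (Fin.cons Y Z) +
      ∑ p, EMap j nab m (Function.update Z p (nab Y (Z p))) := by
  rw [defect]; abel

theorem defect_fin_zero (Y : L) (Z : Fin 0 → L) : defect j nab Y Z = 0 := by
  simp [defect, EMap]

variable {A : Type*} [CommRing A] [AddCommGroup L] [Module A L] [Module A U] {j nab}
  {pbw : SymmAlgebra A L →ₗ[A] U}

theorem comp_perm (hpbw : ∀ n X, pbw (symMonomial A n X) = EMap j nab n X) {m : ℕ}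
    (X : Fin m → L) (σ : Equiv.Perm (Fin m)) : EMap j nab m (X ∘ σ) = EMap j nab m X := by
  rw [← hpbw, ← hpbw, symMonomial_comp_perm]

theorem cons_self_comp_succAbove (hpbw : ∀ n X, pbw (symMonomial A n X) = EMap j nab n X)
    {m : ℕ} (X : Fin (m + 1) → L) (i : Fin (m + 1)) :
    EMap j nab (m + 1) (Fin.cons (X i) (X ∘ i.succAbove)) = EMap j nab (m + 1) X := by
  rw [Fin.cons_self_comp_succAbove, comp_perm hpbw]

theorem cons_cons_comm (hpbw : ∀ n X, pbw (symMonomial A n X) = EMap j nab n X) {m : ℕ}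
    (X Y : L) (W : Fin m → L) :
    EMap j nab (m + 2) (Fin.cons X (Fin.cons Y W)) =
      EMap j nab (m + 2) (Fin.cons Y (Fin.cons X W)) := by
  simp only [← hpbw, symMonomial_cons, mul_left_comm]

theorem cons_sub (hpbw : ∀ n X, pbw (symMonomial A n X) = EMap j nab n X) {m : ℕ}
    (X Y : L) (W : Fin m → L) :
    EMap j nab (m + 1) (Fin.cons (X - Y) W) =
      EMap j nab (m + 1) (Fin.cons X W) - EMap j nab (m + 1) (Fin.cons Y W) := by
  simp only [← hpbw, symMonomial_cons, map_sub, sub_mul]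

theorem defect_comp_perm (hpbw : ∀ n X, pbw (symMonomial A n X) = EMap j nab n X) {m : ℕ}
    (Y : L) (Z : Fin m → L) (σ : Equiv.Perm (Fin m)) :
    defect j nab Y (Z ∘ σ) = defect j nab Y Z := by
  have hcons : EMap j nab (m + 1) (Fin.cons Y (Z ∘ σ)) = EMap j nab (m + 1) (Fin.cons Y Z) := by
    simp only [← hpbw, symMonomial_cons, symMonomial_comp_perm]
  have hsum : ∑ p, EMap j nab m (Function.update (Z ∘ σ) p (nab Y (Z (σ p)))) =
      ∑ p, EMap j nab m (Function.update Z p (nab Y (Z p))) := by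
    simp only [← Function.update_comp_eq_of_injective _ σ.injective, comp_perm hpbw]
    exact Equiv.sum_comp σ fun p => EMap j nab m (Function.update Z p (nab Y (Z p)))
  simp only [defect, comp_perm hpbw, hcons, Function.comp_apply, hsum]

theorem sum_defect_eq_zero (hpbw : ∀ n X, pbw (symMonomial A n X) = EMap j nab n X) {m : ℕ}
    (X : Fin (m + 1) → L) : ∑ k, defect j nab (X k) (X ∘ k.succAbove) = 0 := by
  have hE : ((m : ℚ) + 1) • EMap j nab (m + 1) X =
      (∑ k, j (X k) * EMap j nab m (X ∘ k.succAbove)) -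
        ∑ k, ∑ q, EMap j nab m
          (Function.update (X ∘ k.succAbove) q (nab (X k) (X (k.succAbove q)))) := by
    rw [EMap, smul_smul, mul_inv_cancel₀ (by positivity), one_smul]
  simp only [defect, Finset.sum_sub_distrib, cons_self_comp_succAbove hpbw, Finset.sum_const,
    Finset.card_univ, Fintype.card_fin, Function.comp_apply]
  rw [sub_right_comm, ← hE, ← Nat.cast_smul_eq_nsmul ℚ]
  push_cast
  exact sub_self _

end EMap

section Filtration

variable {A L U : Type*} [CommRing A] [AddCommGroup L] [Module A L] [Ring U] [Algebra ℚ U]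
  [Module A U] {ι : A →+* U} {j : L → U} {ρ : L → A → A} {nab : L → L → L}
  {pbw : SymmAlgebra A L →ₗ[A] U}

theorem EMap_mem_map_Sfil (hpbw : ∀ n X, pbw (symMonomial A n X) = EMap j nab n X) {q n : ℕ}
    (h : q ≤ n) (X : Fin q → L) : EMap j nab q X ∈ (Sfil A L n).map pbw :=
  hpbw q X ▸ Submodule.mem_map_of_mem (Submodule.subset_span ⟨q, h, X, rfl⟩)

theorem j_mul_mem_map_Sfil_succ (hAU : ∀ (a : A) (u : U), a • u = ι a * u)
    (hcomm : ∀ (X : L) (a : A), j X * ι a = ι a * j X + ι (ρ X a))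
    (hpbw : ∀ n X, pbw (symMonomial A n X) = EMap j nab n X) {n : ℕ}
    (hD : ∀ q ≤ n, ∀ X (W : Fin q → L), EMap.defect j nab X W ∈ (Sfil A L (n + 1)).map pbw)
    (Y : L) {u : U} (hu : u ∈ (Sfil A L n).map pbw) : j Y * u ∈ (Sfil A L (n + 1)).map pbw := by
  obtain ⟨s, hs, rfl⟩ := hu
  induction hs using Submodule.span_induction with
  | mem s hs =>
    obtain ⟨q, hq, Z, rfl⟩ := hs
    rw [hpbw, EMap.j_mul_eq]
    exact add_mem (add_mem (hD q hq Y Z) (EMap_mem_map_Sfil hpbw (by omega) _))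
      (sum_mem fun p _ => EMap_mem_map_Sfil hpbw (by omega) _)
  | zero => simp
  | add s t _ _ hs ht => rw [map_add, mul_add]; exact add_mem hs ht
  | smul a s hs ih =>
    rw [map_smul, hAU, ← mul_assoc, hcomm, add_mul, mul_assoc, ← hAU, ← hAU]
    exact add_mem (Submodule.smul_mem _ a ih) (Submodule.smul_mem _ _
      (Submodule.map_mono (Sfil_mono n.le_succ) (Submodule.mem_map_of_mem hs)))

theorem j_mul_EMap_sub_EMap_cons_mem (hpbw : ∀ n X, pbw (symMonomial A n X) = EMap j nab n X)
    {k : ℕ} (hD : ∀ X (W : Fin k → L), EMap.defect j nab X W ∈ (Sfil A L k).map pbw)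
    (Y : L) (W : Fin k → L) :
    j Y * EMap j nab k W - EMap j nab (k + 1) (Fin.cons Y W) ∈ (Sfil A L k).map pbw := by
  rw [EMap.j_mul_eq, add_right_comm, add_sub_cancel_right]
  exact add_mem (hD Y W) (sum_mem fun p _ => EMap_mem_map_Sfil hpbw le_rfl _)

end Filtration

section Bracket

variable {A L U : Type*} [CommRing A] [LieRing L] [Module A L] [Ring U] [Algebra ℚ U]
  [Module A U] {j : L → U} {nab : L → L → L} {pbw : SymmAlgebra A L →ₗ[A] U}

theorem defect_cons_sub_defect_cons_mem (hbr : ∀ X Y : L, j X * j Y - j Y * j X = j ⁅X, Y⁆)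
    (htf : ∀ X Y : L, nab X Y - nab Y X = ⁅X, Y⁆)
    (hpbw : ∀ n X, pbw (symMonomial A n X) = EMap j nab n X) {k : ℕ}
    (hD : ∀ X (W : Fin k → L), EMap.defect j nab X W ∈ (Sfil A L k).map pbw)
    (hjD : ∀ Y X (W : Fin k → L), j Y * EMap.defect j nab X W ∈ (Sfil A L k).map pbw)
    (X Y : L) (W : Fin k → L) :
    EMap.defect j nab Y (Fin.cons X W) - EMap.defect j nab X (Fin.cons Y W) ∈
      (Sfil A L k).map pbw := by
  set c := fun (Z : L) (V : Fin k → L) => j Z * EMap j nab k V - EMap j nab (k + 1) (Fin.cons Z V)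
  have key : EMap.defect j nab Y (Fin.cons X W) - EMap.defect j nab X (Fin.cons Y W) =
      j X * EMap.defect j nab Y W - j Y * EMap.defect j nab X W + c ⁅Y, X⁆ W +
        ∑ q, c X (Function.update W q (nab Y (W q))) -
        ∑ q, c Y (Function.update W q (nab X (W q))) := by
    simp only [c]
    rw [← hbr Y X, ← htf Y X, EMap.cons_sub hpbw]
    simp only [EMap.defect, Fin.sum_univ_succ, Fin.cons_zero, Fin.cons_succ,
      Fin.update_cons_zero, ← Fin.cons_update, EMap.cons_cons_comm hpbw Y X, mul_sub, sub_mul,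
      mul_assoc, Finset.mul_sum, Finset.sum_sub_distrib]
    abel
  rw [key]
  have hc := j_mul_EMap_sub_EMap_cons_mem hpbw hD
  exact sub_mem (add_mem (add_mem (sub_mem (hjD X Y W) (hjD Y X W)) (hc _ _))
    (sum_mem fun q _ => hc _ _)) (sum_mem fun q _ => hc _ _)

end Bracket

section Induction

variable {A L U : Type*} [CommRing A] [Algebra ℚ A] [LieRing L] [Module A L] [Ring U]
  [Algebra ℚ U] [Module A U] {ι : A →+* U} {j : L → U} {ρ : L → A → A} {nab : L → L → L}
  {pbw : SymmAlgebra A L →ₗ[A] U}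

theorem defect_succ_mem (hbr : ∀ X Y : L, j X * j Y - j Y * j X = j ⁅X, Y⁆)
    (htf : ∀ X Y : L, nab X Y - nab Y X = ⁅X, Y⁆)
    (hpbw : ∀ n X, pbw (symMonomial A n X) = EMap j nab n X) {k : ℕ}
    (hD : ∀ X (W : Fin k → L), EMap.defect j nab X W ∈ (Sfil A L k).map pbw)
    (hjD : ∀ Y X (W : Fin k → L), j Y * EMap.defect j nab X W ∈ (Sfil A L k).map pbw)
    (Y : L) (Z : Fin (k + 1) → L) : EMap.defect j nab Y Z ∈ (Sfil A L k).map pbw := by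
  have hsum : EMap.defect j nab Y Z +
      ∑ i, EMap.defect j nab (Z i) (Fin.cons Y (Z ∘ i.succAbove)) = 0 := by
    have h := EMap.sum_defect_eq_zero hpbw (Fin.cons Y Z)
    rw [Fin.sum_univ_succ] at h
    simp only [Fin.cons_zero, Fin.cons_succ, Fin.succAbove_zero, Fin.cons_comp_succ,
      Fin.cons_comp_succ_succAbove] at h
    exact h
  have key : (k + 2) • EMap.defect j nab Y Z =
      ∑ i, (EMap.defect j nab Y (Fin.cons (Z i) (Z ∘ i.succAbove)) -
        EMap.defect j nab (Z i) (Fin.cons Y (Z ∘ i.succAbove))) := by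
    simp only [Fin.cons_self_comp_succAbove, EMap.defect_comp_perm hpbw, Finset.sum_sub_distrib,
      Finset.sum_const, Finset.card_univ, Fintype.card_fin]
    rw [eq_neg_of_add_eq_zero_right hsum, sub_neg_eq_add, ← succ_nsmul]
  have hunit : IsUnit ((k + 2 : ℕ) : A) := by
    rw [← map_natCast (algebraMap ℚ A)]
    exact (Nat.cast_ne_zero.mpr (by omega)).isUnit.map _
  rw [← Submodule.smul_mem_iff_of_isUnit _ hunit, Nat.cast_smul_eq_nsmul, key]
  exact sum_mem fun i _ => defect_cons_sub_defect_cons_mem hbr htf hpbw hD hjD _ _ _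

theorem defect_mem_map_Sfil (hAU : ∀ (a : A) (u : U), a • u = ι a * u)
    (hcomm : ∀ (X : L) (a : A), j X * ι a = ι a * j X + ι (ρ X a))
    (hbr : ∀ X Y : L, j X * j Y - j Y * j X = j ⁅X, Y⁆)
    (htf : ∀ X Y : L, nab X Y - nab Y X = ⁅X, Y⁆)
    (hpbw : ∀ n X, pbw (symMonomial A n X) = EMap j nab n X) (q n : ℕ) (hqn : q ≤ n + 1)
    (X : L) (W : Fin q → L) : EMap.defect j nab X W ∈ (Sfil A L n).map pbw := by
  induction q using Nat.strong_induction_on generalizing n X with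
  | _ q ih =>
  cases q with
  | zero => rw [EMap.defect_fin_zero]; exact zero_mem _
  | succ k =>
    refine Submodule.map_mono (Sfil_mono (by omega : k ≤ n)) ?_
    refine defect_succ_mem hbr htf hpbw (fun X W => ih k (by omega) k (by omega) X W) ?_ X W
    intro Y X W
    cases k with
    | zero => rw [EMap.defect_fin_zero, mul_zero]; exact zero_mem _
    | succ k =>
      exact j_mul_mem_map_Sfil_succ hAU hcomm hpbw
        (fun q hq => ih q (by omega) (k + 1) (by omega)) Y (ih (k + 1) (by omega) k le_rfl X W)

end Induction

theorem nablaPrime_highest_order_general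
    {A L U : Type*} [CommRing A] [Algebra ℚ A]
    [LieRing L] [Module A L]
    [Ring U] [Algebra ℚ U] [Module A U]
    (ι : A →+* U) (j : L → U) (ρ : L → A → A) (nab : L → L → L)
    (hAU : ∀ (a : A) (u : U), a • u = ι a * u)
    (hcomm : ∀ (X : L) (a : A), j X * ι a = ι a * j X + ι (ρ X a))
    (hbr : ∀ X Y : L, j X * j Y - j Y * j X = j ⁅X, Y⁆)
    (htf : ∀ X Y : L, nab X Y - nab Y X = ⁅X, Y⁆)
    (pbw : SymmAlgebra A L →ₗ[A] U)
    (hpbw : ∀ (n : ℕ) (X : Fin n → L), pbw (symMonomial A n X) = EMap j nab n X)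
    (hbij : Function.Bijective pbw)
    (n : ℕ) (X₀ : L) (X : Fin (n + 1) → L) :
    (LinearEquiv.ofBijective pbw hbij).symm (j X₀ * pbw (symMonomial A (n + 1) X)) -
        (ιSym A L X₀ * symMonomial A (n + 1) X +
          ∑ m : Fin (n + 1), symMonomial A (n + 1) (Function.update X m (nab X₀ (X m))))
      ∈ Sfil A L n := by
  obtain ⟨s, hs, hps⟩ := defect_mem_map_Sfil hAU hcomm hbr htf hpbw (n + 1) n le_rfl X₀ X
  have hs_eq : (LinearEquiv.ofBijective pbw hbij).symm (j X₀ * pbw (symMonomial A (n + 1) X)) =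
      s + (ιSym A L X₀ * symMonomial A (n + 1) X +
        ∑ m : Fin (n + 1), symMonomial A (n + 1) (Function.update X m (nab X₀ (X m)))) := by
    rw [LinearEquiv.symm_apply_eq, LinearEquiv.ofBijective_apply, map_add, map_add, map_sum, hps,
      ← symMonomial_cons]
    simp only [hpbw, EMap.j_mul_eq]
    abel
  rw [hs_eq, add_sub_cancel_right]
  exact hs

theorem nablaPrime_highest_order
    {A L U : Type*} [CommRing A] [Algebra ℚ A]
    [LieRing L] [Module A L] [Module.Projective A L]
    [Ring U] [Algebra ℚ U] [Module A U]
    (ι : A →+* U) (j : L → U) (ρ : L → A → A) (nab : L → L → L)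
    (hAU : ∀ (a : A) (u : U), a • u = ι a * u)
    (hj_add : ∀ X Y : L, j (X + Y) = j X + j Y)
    (hj_smul : ∀ (a : A) (X : L), j (a • X) = ι a * j X)
    (hcomm : ∀ (X : L) (a : A), j X * ι a = ι a * j X + ι (ρ X a))
    (hbr : ∀ X Y : L, j X * j Y - j Y * j X = j ⁅X, Y⁆)
    (hnab_smul₁ : ∀ (a : A) (X Y : L), nab (a • X) Y = a • nab X Y)
    (hnab_smul₂ : ∀ (a : A) (X Y : L), nab X (a • Y) = ρ X a • Y + a • nab X Y)
    (htf : ∀ X Y : L, nab X Y - nab Y X = ⁅X, Y⁆)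
    (pbw : SymmAlgebra A L →ₗ[A] U)
    (hpbw : ∀ (n : ℕ) (X : Fin n → L), pbw (symMonomial A n X) = EMap j nab n X)
    (hbij : Function.Bijective pbw)
    (n : ℕ) (X₀ : L) (X : Fin (n + 1) → L) :
    (LinearEquiv.ofBijective pbw hbij).symm (j X₀ * pbw (symMonomial A (n + 1) X)) -
        (ιSym A L X₀ * symMonomial A (n + 1) X +
          ∑ m : Fin (n + 1), symMonomial A (n + 1) (Function.update X m (nab X₀ (X m))))
      ∈ Sfil A L n :=
  nablaPrime_highest_order_general ι j ρ nab hAU hcomm hbr htf pbw hpbw hbij n X₀ X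

end
end

section
/- For all n ≥ 1 and X_0,…,X_n ∈ L, the map Θ satisfies the cyclic identity Σ_{k=0}^{n} (i_{X_k}Θ)(X_0 ⊙ ⋯ ⊙ X̂_k ⊙ ⋯ ⊙ X_n) = 0 in S_A(L). -/
/-! STATEMENT 14: the cyclic identity
`Σ_{k=0}^{n} (i_{X_k}Θ)(X_0 ⊙ ⋯ ⊙ X̂_k ⊙ ⋯ ⊙ X_n) = 0` in `S_A(L)` (`n ≥ 1`). -/

noncomputable section

section Aux

variable {A L : Type*} [CommRing A] [AddCommGroup L] [Module A L]

lemma iSym_comm (x y : L) : ιSym A L x * ιSym A L y = ιSym A L y * ιSym A L x := by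
  have h := RingQuot.mkAlgHom_rel A (SymRel.mk (A:=A) (L:=L) x y)
  rw [map_mul, map_mul] at h
  exact h

lemma symMonomial_succ (n : ℕ) (f : Fin (n+1) → L) :
    symMonomial A (n+1) f = ιSym A L (f 0) * symMonomial A n (f ∘ Fin.succ) := by
  simp [symMonomial, List.ofFn_succ, Function.comp]

lemma symMonomial_prepend : ∀ (n : ℕ) (f : Fin (n+1) → L) (k : Fin (n+1)),
    ιSym A L (f k) * symMonomial A n (f ∘ k.succAbove) = symMonomial A (n+1) f := by
  intro n
  induction n with
  | zero =>
      intro f k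
      have : k = 0 := Fin.eq_zero k
      subst this
      simp [symMonomial]
  | succ n ih =>
      intro f k
      induction k using Fin.cases with
      | zero =>
          rw [symMonomial_succ (n+1) f]
          have hh : f ∘ (0 : Fin (n+2)).succAbove = f ∘ Fin.succ := by
            funext i; simp
          rw [hh]
      | succ i =>
          have h0 : (f ∘ (i.succ).succAbove) 0 = f 0 := by
            simp [Function.comp, Fin.succ_succAbove_zero]
          have htail : ((f ∘ (i.succ).succAbove) ∘ Fin.succ) = (f ∘ Fin.succ) ∘ i.succAbove := by
            funext m; simp [Function.comp, Fin.succ_succAbove_succ]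
          rw [symMonomial_succ n (f ∘ (i.succ).succAbove), h0, htail,
            ← mul_assoc, iSym_comm, mul_assoc]
          have := ih (f ∘ Fin.succ) i
          rw [show f i.succ = (f ∘ Fin.succ) i from rfl, this, symMonomial_succ (n+1) f]

end Aux

theorem Theta_cyclic_identity
    {A L U : Type*} [CommRing A] [Algebra ℚ A]
    [LieRing L] [Module A L] [Module.Projective A L]
    [Ring U] [Algebra ℚ U] [Module A U]
    (ι : A →+* U) (j : L → U) (ρ : L → A → A) (nab : L → L → L)
    (hAU : ∀ (a : A) (u : U), a • u = ι a * u)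
    (hj_add : ∀ X Y : L, j (X + Y) = j X + j Y)
    (hj_smul : ∀ (a : A) (X : L), j (a • X) = ι a * j X)
    (hcomm : ∀ (X : L) (a : A), j X * ι a = ι a * j X + ι (ρ X a))
    (hbr : ∀ X Y : L, j X * j Y - j Y * j X = j ⁅X, Y⁆)
    (pbw : SymmAlgebra A L →ₗ[A] U)
    (hpbw : ∀ (n : ℕ) (X : Fin n → L), pbw (symMonomial A n X) = EMap j nab n X)
    (hbij : Function.Bijective pbw)
    (n : ℕ) (X : Fin (n + 2) → L) :
    -- `Σ_k (i_{X_k}Θ)(X_0⊙⋯⊙X̂_k⊙⋯⊙X_n) = 0`, where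
    -- `(i_YΘ)(S) = ∇'_Y S − Y⊙S − ∇_Y S`
    ∑ k : Fin (n + 2),
        ((LinearEquiv.ofBijective pbw hbij).symm
            (j (X k) * pbw (symMonomial A (n + 1) (X ∘ k.succAbove))) -
          ιSym A L (X k) * symMonomial A (n + 1) (X ∘ k.succAbove) -
          ∑ m : Fin (n + 1),
            symMonomial A (n + 1)
              (Function.update (X ∘ k.succAbove) m (nab (X k) (X (k.succAbove m))))) =
      0 := by
  classical
  set e := LinearEquiv.ofBijective pbw hbij with he
  set M := symMonomial A (n+2) X with hM
  have hprep : ∀ k : Fin (n+2),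
      ιSym A L (X k) * symMonomial A (n+1) (X ∘ k.succAbove) = M :=
    fun k => symMonomial_prepend (n+1) X k
  have hne : ((n:ℚ)+1+1) ≠ 0 := by positivity
  have hE : EMap j nab (n+2) X = (((n+1 : ℕ):ℚ)+1)⁻¹ •
      ((∑ k : Fin (n+2), j (X k) * EMap j nab (n+1) (X ∘ k.succAbove)) -
        ∑ k : Fin (n+2), ∑ m : Fin (n+1),
          EMap j nab (n+1)
            (Function.update (X ∘ k.succAbove) m (nab (X k) (X (k.succAbove m))))) := rfl
  have hrec : (∑ k : Fin (n+2), j (X k) * EMap j nab (n+1) (X ∘ k.succAbove))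
      = (n+2) • EMap j nab (n+2) X +
        ∑ k : Fin (n+2), ∑ m : Fin (n+1),
          EMap j nab (n+1)
            (Function.update (X ∘ k.succAbove) m (nab (X k) (X (k.succAbove m)))) := by
    have h2 : ((n:ℚ)+1+1) • EMap j nab (n+2) X
        = (∑ k : Fin (n+2), j (X k) * EMap j nab (n+1) (X ∘ k.succAbove)) -
          ∑ k : Fin (n+2), ∑ m : Fin (n+1),
            EMap j nab (n+1)
              (Function.update (X ∘ k.succAbove) m (nab (X k) (X (k.succAbove m)))) := by
      rw [hE, smul_smul]
      push_cast
      rw [mul_inv_cancel₀ hne, one_smul]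
    have h3 : ((n:ℚ)+1+1) • EMap j nab (n+2) X = (n+2) • EMap j nab (n+2) X := by
      rw [← Nat.cast_smul_eq_nsmul ℚ (n+2)]
      push_cast
      ring_nf
    rw [← h3, h2]
    abel
  have key : (∑ k : Fin (n+2),
        e.symm (j (X k) * pbw (symMonomial A (n+1) (X ∘ k.succAbove))))
      = (n+2) • M + ∑ k : Fin (n+2), ∑ m : Fin (n+1),
          symMonomial A (n+1)
            (Function.update (X ∘ k.succAbove) m (nab (X k) (X (k.succAbove m)))) := by
    apply e.injective
    rw [map_sum, map_add, map_nsmul, map_sum]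
    have heapp : ∀ y : SymmAlgebra A L, e y = pbw y := fun y => rfl
    have hterm : ∀ k : Fin (n+2),
        e (e.symm (j (X k) * pbw (symMonomial A (n+1) (X ∘ k.succAbove))))
          = j (X k) * EMap j nab (n+1) (X ∘ k.succAbove) := by
      intro k
      rw [e.apply_symm_apply, hpbw]
    calc ∑ k : Fin (n+2),
          e (e.symm (j (X k) * pbw (symMonomial A (n+1) (X ∘ k.succAbove))))
        = ∑ k : Fin (n+2), j (X k) * EMap j nab (n+1) (X ∘ k.succAbove) :=
          Finset.sum_congr rfl fun k _ => hterm k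
      _ = (n+2) • EMap j nab (n+2) X +
          ∑ k : Fin (n+2), ∑ m : Fin (n+1),
            EMap j nab (n+1)
              (Function.update (X ∘ k.succAbove) m (nab (X k) (X (k.succAbove m)))) := hrec
      _ = (n+2) • e M + ∑ k : Fin (n+2),
            e (∑ m : Fin (n+1), symMonomial A (n+1)
              (Function.update (X ∘ k.succAbove) m (nab (X k) (X (k.succAbove m))))) := by
          rw [heapp M, hM, hpbw]
          congr 1
          refine Finset.sum_congr rfl fun k _ => ?_
          rw [map_sum]
          exact Finset.sum_congr rfl fun m _ => by rw [heapp, hpbw]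
  have hconst : (∑ _k : Fin (n+2), M) = (n+2) • M := by
    simp
  rw [Finset.sum_sub_distrib, Finset.sum_sub_distrib, key]
  simp only [hprep]
  rw [hconst]
  abel


end
end

section
/- Homological perturbation lemma: Let (N, δ) and (M, d) be cochain complexes with a filtered contraction: chain maps σ : N → M, τ : M → N and a degree −1 map h : N → N with στ = id_M, τσ − id_N = hδ + δh, σh = 0, hτ = 0, hh = 0, all preserving exhaustive complete descending filtrations. Let ∂ : N → N be a perturbation ((δ+∂)² = 0, ∂ lowers the filtration by 1). Then the series ϑ = Σ_{k≥0} σ∂(h∂)^kτ, σ̃ = Σ_{k≥0} σ(∂h)^k, τ̃ = Σ_{k≥0} (h∂)^kτ, h̃ = Σ_{k≥0} (h∂)^k h converge, ϑ is a perturbation of d, and (σ̃, τ̃, h̃) form a contraction of (N, δ+∂) onto (M, d+ϑ): σ̃τ̃ = id, τ̃σ̃ − id = h̃(δ+∂) + (δ+∂)h̃, σ̃h̃ = 0, h̃τ̃ = 0, h̃h̃ = 0. -/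
/-! STATEMENT 15: the homological perturbation lemma for filtered contractions
of cochain complexes of modules over a commutative ring.

A cochain complex is given by modules `Nc i` (`i : ℤ`) and differentials
`δ i : Nc i → Nc (i+1)`; the homotopy `h` has degree `−1`.  Filtrations are
descending (`F (p-1) ≤ F p`), exhaustive (`⨆ p, F p = ⊤`) and complete
(Hausdorff plus existence of limits of Cauchy families); a perturbation `∂`
maps `F p` into `F (p-1)`.  Convergence of each series is expressed by the
tails of its partial sums lying arbitrarily deep in the filtration. -/

set_option maxHeartbeats 3200000 in
theorem homological_perturbation
    {R : Type*} [CommRing R]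
    (Nc Mc : ℤ → Type*)
    [∀ i, AddCommGroup (Nc i)] [∀ i, Module R (Nc i)]
    [∀ i, AddCommGroup (Mc i)] [∀ i, Module R (Mc i)]
    (δ : ∀ i, Nc i →ₗ[R] Nc (i + 1)) (d : ∀ i, Mc i →ₗ[R] Mc (i + 1))
    (σ : ∀ i, Nc i →ₗ[R] Mc i) (τ : ∀ i, Mc i →ₗ[R] Nc i)
    (h : ∀ i, Nc (i + 1) →ₗ[R] Nc i)
    (F : ℤ → ∀ i, Submodule R (Nc i)) (G : ℤ → ∀ i, Submodule R (Mc i))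
    (pert : ∀ i, Nc i →ₗ[R] Nc (i + 1))
    -- `(N, δ)` and `(M, d)` are cochain complexes
    (hδδ : ∀ i, (δ (i + 1)).comp (δ i) = 0)
    (hdd : ∀ i, (d (i + 1)).comp (d i) = 0)
    -- `σ`, `τ` are chain maps
    (hσchain : ∀ i, (σ (i + 1)).comp (δ i) = (d i).comp (σ i))
    (hτchain : ∀ i, (δ i).comp (τ i) = (τ (i + 1)).comp (d i))
    -- contraction identities
    (hστ : ∀ i, (σ i).comp (τ i) = LinearMap.id)
    (hhomotopy : ∀ i,
        (τ (i + 1)).comp (σ (i + 1)) - LinearMap.id =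
          (h (i + 1)).comp (δ (i + 1)) + (δ i).comp (h i))
    (hσh : ∀ i, (σ i).comp (h i) = 0)
    (hhτ : ∀ i, (h i).comp (τ (i + 1)) = 0)
    (hhh : ∀ i, (h i).comp (h (i + 1)) = 0)
    -- descending filtrations
    (hFmono : ∀ p i, F (p - 1) i ≤ F p i)
    (hGmono : ∀ p i, G (p - 1) i ≤ G p i)
    -- exhaustive
    (hFexh : ∀ i, (⨆ p, F p i) = ⊤) (hGexh : ∀ i, (⨆ p, G p i) = ⊤)
    -- complete (Hausdorff and existence of limits of Cauchy families)
    (hFhaus : ∀ i, (⨅ p, F p i) = ⊥) (hGhaus : ∀ i, (⨅ p, G p i) = ⊥)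
    (hFcomplete : ∀ i (c : ℤ → Nc i),
        (∀ p q, p ≤ q → c p - c q ∈ F q i) → ∃ x, ∀ p, x - c p ∈ F p i)
    (hGcomplete : ∀ i (c : ℤ → Mc i),
        (∀ p q, p ≤ q → c p - c q ∈ G q i) → ∃ x, ∀ p, x - c p ∈ G p i)
    -- all structure maps preserve the filtrations (filtered contraction)
    (hδF : ∀ p i, ∀ x ∈ F p i, δ i x ∈ F p (i + 1))
    (hdG : ∀ p i, ∀ x ∈ G p i, d i x ∈ G p (i + 1))
    (hσF : ∀ p i, ∀ x ∈ F p i, σ i x ∈ G p i)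
    (hτG : ∀ p i, ∀ x ∈ G p i, τ i x ∈ F p i)
    (hhF : ∀ p i, ∀ x ∈ F p (i + 1), h i x ∈ F p i)
    -- `∂` is a perturbation: `(δ+∂)² = 0` and `∂` lowers the filtration
    (hpert : ∀ i, (δ (i + 1) + pert (i + 1)).comp (δ i + pert i) = 0)
    (hlow : ∀ p i, ∀ x ∈ F p i, pert i x ∈ F (p - 1) (i + 1)) :
    -- conclusion: the four series converge, `ϑ` is a perturbation of `d`, and
    -- `(σ̃, τ̃, h̃)` is a filtered contraction of `(N, δ+∂)` onto `(M, d+ϑ)`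
    ∃ (ϑ : ∀ i, Mc i →ₗ[R] Mc (i + 1)) (σ' : ∀ i, Nc i →ₗ[R] Mc i)
      (τ' : ∀ i, Mc i →ₗ[R] Nc i) (h' : ∀ i, Nc (i + 1) →ₗ[R] Nc i),
      -- `ϑ = Σ_k σ∂(h∂)^k τ`
      (∀ i (x : Mc i) (p : ℤ), ∃ K : ℕ, ∀ k ≥ K,
          ϑ i x - ∑ l ∈ Finset.range k,
              (σ (i + 1)) ((pert i) ((((h i).comp (pert i)) ^ l) ((τ i) x)))
            ∈ G p (i + 1)) ∧
      -- `σ̃ = Σ_k σ(∂h)^k`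
      (∀ i (x : Nc (i + 1)) (p : ℤ), ∃ K : ℕ, ∀ k ≥ K,
          σ' (i + 1) x - ∑ l ∈ Finset.range k,
              (σ (i + 1)) ((((pert i).comp (h i)) ^ l) x)
            ∈ G p (i + 1)) ∧
      -- `τ̃ = Σ_k (h∂)^k τ`
      (∀ i (x : Mc i) (p : ℤ), ∃ K : ℕ, ∀ k ≥ K,
          τ' i x - ∑ l ∈ Finset.range k, ((((h i).comp (pert i)) ^ l) ((τ i) x))
            ∈ F p i) ∧
      -- `h̃ = Σ_k (h∂)^k h`
      (∀ i (x : Nc (i + 1)) (p : ℤ), ∃ K : ℕ, ∀ k ≥ K,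
          h' i x - ∑ l ∈ Finset.range k, ((((h i).comp (pert i)) ^ l) ((h i) x))
            ∈ F p i) ∧
      -- `ϑ` is a perturbation of `d`
      (∀ i, (d (i + 1) + ϑ (i + 1)).comp (d i + ϑ i) = 0) ∧
      (∀ p i, ∀ x ∈ G p i, ϑ i x ∈ G (p - 1) (i + 1)) ∧
      -- `σ̃`, `τ̃` are chain maps for the perturbed differentials
      (∀ i, (σ' (i + 1)).comp (δ i + pert i) = (d i + ϑ i).comp (σ' i)) ∧
      (∀ i, (δ i + pert i).comp (τ' i) = (τ' (i + 1)).comp (d i + ϑ i)) ∧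
      -- contraction identities
      (∀ i, (σ' i).comp (τ' i) = LinearMap.id) ∧
      (∀ i, (τ' (i + 1)).comp (σ' (i + 1)) - LinearMap.id =
          (h' (i + 1)).comp (δ (i + 1) + pert (i + 1)) + (δ i + pert i).comp (h' i)) ∧
      (∀ i, (σ' i).comp (h' i) = 0) ∧
      (∀ i, (h' i).comp (τ' (i + 1)) = 0) ∧
      (∀ i, (h' i).comp (h' (i + 1)) = 0) ∧
      -- the new contraction is again filtered
      (∀ p i, ∀ x ∈ F p i, σ' i x ∈ G p i) ∧
      (∀ p i, ∀ x ∈ G p i, τ' i x ∈ F p i) ∧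
      (∀ p i, ∀ x ∈ F p (i + 1), h' i x ∈ F p i) := by
  classical
  -- pointwise forms of the hypotheses
  have pστ : ∀ i (x : Mc i), σ i (τ i x) = x := by
    intro i x; have := LinearMap.ext_iff.mp (hστ i) x; simpa using this
  have pσh : ∀ i (x : Nc (i+1)), σ i (h i x) = 0 := by
    intro i x; have := LinearMap.ext_iff.mp (hσh i) x; simpa using this
  have phτ : ∀ i (x : Mc (i+1)), h i (τ (i+1) x) = 0 := by
    intro i x; have := LinearMap.ext_iff.mp (hhτ i) x; simpa using this
  have phh : ∀ i (x : Nc (i+1+1)), h i (h (i+1) x) = 0 := by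
    intro i x; have := LinearMap.ext_iff.mp (hhh i) x; simpa using this
  have pδδ : ∀ i (x : Nc i), δ (i+1) (δ i x) = 0 := by
    intro i x; have := LinearMap.ext_iff.mp (hδδ i) x; simpa using this
  have pdσ : ∀ i (x : Nc i), d i (σ i x) = σ (i+1) (δ i x) := by
    intro i x; have := LinearMap.ext_iff.mp (hσchain i) x
    simpa using this.symm
  have pτd : ∀ i (x : Mc i), τ (i+1) (d i x) = δ i (τ i x) := by
    intro i x; have := LinearMap.ext_iff.mp (hτchain i) x
    simpa using this.symm
  have pτσ : ∀ i (x : Nc (i+1)),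
      τ (i+1) (σ (i+1) x) = h (i+1) (δ (i+1) x) + δ i (h i x) + x := by
    intro i x
    have h0 := LinearMap.ext_iff.mp (hhomotopy i) x
    simp only [LinearMap.sub_apply, LinearMap.comp_apply, LinearMap.add_apply,
      LinearMap.id_apply] at h0
    rw [show τ (i+1) (σ (i+1) x) = (τ (i+1) (σ (i+1) x) - x) + x from by abel, h0]
  have pdp : ∀ i (x : Nc i),
      δ (i+1) (pert i x) = -pert (i+1) (δ i x) - pert (i+1) (pert i x) := by
    intro i x
    have h0 := LinearMap.ext_iff.mp (hpert i) x
    simp only [LinearMap.add_apply, LinearMap.comp_apply, LinearMap.zero_apply,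
      map_add, pδδ, zero_add] at h0
    have h1 : δ (i+1) (pert i x) - (-pert (i+1) (δ i x) - pert (i+1) (pert i x)) = 0 := by
      rw [← h0]; abel
    exact sub_eq_zero.mp h1
  -- monotonicity of the filtrations
  have Fmono : ∀ i (p q : ℤ), p ≤ q → F p i ≤ F q i := by
    intro i p q hpq
    obtain ⟨n, rfl⟩ : ∃ n : ℕ, q = p + n := ⟨(q - p).toNat, by omega⟩
    clear hpq
    induction n with
    | zero => simp
    | succ n ih =>
      refine le_trans ih ?_
      have h1 := hFmono (p + (n+1 : ℕ)) i
      have e : (p + ((n+1 : ℕ) : ℤ)) - 1 = p + (n : ℕ) := by push_cast; ring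
      rwa [e] at h1
  have Gmono : ∀ i (p q : ℤ), p ≤ q → G p i ≤ G q i := by
    intro i p q hpq
    obtain ⟨n, rfl⟩ : ∃ n : ℕ, q = p + n := ⟨(q - p).toNat, by omega⟩
    clear hpq
    induction n with
    | zero => simp
    | succ n ih =>
      refine le_trans ih ?_
      have h1 := hGmono (p + (n+1 : ℕ)) i
      have e : (p + ((n+1 : ℕ) : ℤ)) - 1 = p + (n : ℕ) := by push_cast; ring
      rwa [e] at h1
  -- exhaustiveness and Hausdorff property, pointwise
  have memF : ∀ i (x : Nc i), ∃ p, x ∈ F p i := by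
    intro i x
    have hd : Directed (· ≤ ·) (fun p => F p i) := fun p q =>
      ⟨max p q, Fmono i p _ (le_max_left _ _), Fmono i q _ (le_max_right _ _)⟩
    have hx : x ∈ ⨆ p, F p i := by rw [hFexh i]; trivial
    exact (Submodule.mem_iSup_of_directed _ hd).mp hx
  have hausF : ∀ i (x : Nc i), (∀ p, x - 0 ∈ F p i) → x = 0 := by
    intro i x hx
    have : x ∈ ⨅ p, F p i := Submodule.mem_iInf _ |>.mpr (by simpa using hx)
    rw [hFhaus i] at this; simpa using this
  have approx_eq : ∀ i (y z : Nc i), (∀ p, y - z ∈ F p i) → y = z := by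
    intro i y z hp
    have : y - z = 0 := by
      apply hausF i
      simpa using hp
    exact sub_eq_zero.mp this
  -- powers of A = h ∘ ∂ lower the filtration
  have hApow : ∀ (l : ℕ) (p : ℤ) i (x : Nc i), x ∈ F p i →
      ((((h i).comp (pert i)) ^ l) x) ∈ F (p - l) i := by
    intro l
    induction l with
    | zero => intro p i x hx; simpa using hx
    | succ l ih =>
      intro p i x hx
      have h1 : (((h i).comp (pert i)) ^ (l+1)) x
          = (((h i).comp (pert i)) ^ l) (h i (pert i x)) := by
        rw [pow_succ, Module.End.mul_apply]; rfl
      rw [h1]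
      have h2 : h i (pert i x) ∈ F (p - 1) i := hhF _ _ _ (hlow p i x hx)
      have h3 := ih (p-1) i _ h2
      have e : p - 1 - (l : ℤ) = p - ((l+1 : ℕ) : ℤ) := by push_cast; ring
      rwa [e] at h3
  -- partial sums stay in the filtration
  have hSmem : ∀ i (p : ℤ) (x : Nc i), x ∈ F p i → ∀ k : ℕ,
      (∑ l ∈ Finset.range k, (((h i).comp (pert i)) ^ l) x) ∈ F p i := by
    intro i p x hx k
    apply Submodule.sum_mem
    intro l _
    exact Fmono i _ _ (by omega) (hApow l p i x hx)
  -- Cauchy property of partial sums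
  have hScauchy : ∀ i (p : ℤ) (x : Nc i), x ∈ F p i → ∀ k k' : ℕ, k ≤ k' →
      (∑ l ∈ Finset.range k', (((h i).comp (pert i)) ^ l) x)
        - (∑ l ∈ Finset.range k, (((h i).comp (pert i)) ^ l) x) ∈ F (p - k) i := by
    intro i p x hx k k' hkk'
    rw [← Finset.sum_Ico_eq_sub _ hkk']
    apply Submodule.sum_mem
    intro l hl
    have hl' := Finset.mem_Ico.mp hl
    exact Fmono i _ _ (by omega) (hApow l p i x hx)
  -- construction of the limit operator X = Σ (h∂)^k
  obtain ⟨X, hX⟩ : ∃ X : ∀ i, Nc i →ₗ[R] Nc i, ∀ i (x : Nc i) (q : ℤ),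
      ∃ K : ℕ, ∀ k ≥ K,
        X i x - ∑ l ∈ Finset.range k, (((h i).comp (pert i)) ^ l) x ∈ F q i := by
    have key : ∀ i (x : Nc i), ∃ y : Nc i, ∀ q : ℤ, ∃ K : ℕ, ∀ k ≥ K,
        y - ∑ l ∈ Finset.range k, (((h i).comp (pert i)) ^ l) x ∈ F q i := by
      intro i x
      obtain ⟨p₀, hp₀⟩ := memF i x
      set c : ℤ → Nc i :=
        fun q => ∑ l ∈ Finset.range (p₀ - q).toNat, (((h i).comp (pert i)) ^ l) x with hc
      have hcC : ∀ p q, p ≤ q → c p - c q ∈ F q i := by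
        intro p q hpq
        have h1 : (p₀ - q).toNat ≤ (p₀ - p).toNat := by omega
        have h2 := hScauchy i p₀ x hp₀ _ _ h1
        exact Fmono i _ _ (by omega) h2
      obtain ⟨y, hy⟩ := hFcomplete i c hcC
      refine ⟨y, fun q => ⟨(p₀ - q).toNat, fun k hk => ?_⟩⟩
      have h1 : y - c q ∈ F q i := hy q
      have h2 := hScauchy i p₀ x hp₀ _ _ hk
      have h2' : (∑ l ∈ Finset.range k, (((h i).comp (pert i)) ^ l) x) - c q
          ∈ F q i := Fmono i _ _ (by omega) h2
      have e : y - ∑ l ∈ Finset.range k, (((h i).comp (pert i)) ^ l) x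
          = (y - c q) - ((∑ l ∈ Finset.range k, (((h i).comp (pert i)) ^ l) x) - c q) := by
        abel
      rw [e]; exact sub_mem h1 h2'
    choose Xf hXf using key
    have hadd : ∀ i (x y : Nc i), Xf i (x + y) = Xf i x + Xf i y := by
      intro i x y
      apply approx_eq
      intro p
      obtain ⟨K1, hK1⟩ := hXf i x p
      obtain ⟨K2, hK2⟩ := hXf i y p
      obtain ⟨K3, hK3⟩ := hXf i (x+y) p
      set k := max K1 (max K2 K3)
      have e : Xf i (x+y) - (Xf i x + Xf i y)
          = (Xf i (x+y) - ∑ l ∈ Finset.range k, (((h i).comp (pert i)) ^ l) (x+y))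
            - (Xf i x - ∑ l ∈ Finset.range k, (((h i).comp (pert i)) ^ l) x)
            - (Xf i y - ∑ l ∈ Finset.range k, (((h i).comp (pert i)) ^ l) y) := by
        simp only [map_add, Finset.sum_add_distrib]
        abel
      rw [e]
      exact sub_mem (sub_mem (hK3 k (by omega)) (hK1 k (by omega))) (hK2 k (by omega))
    have hsmul : ∀ i (r : R) (x : Nc i), Xf i (r • x) = r • Xf i x := by
      intro i r x
      apply approx_eq
      intro p
      obtain ⟨K1, hK1⟩ := hXf i x p
      obtain ⟨K3, hK3⟩ := hXf i (r • x) p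
      set k := max K1 K3
      have e : Xf i (r • x) - r • Xf i x
          = (Xf i (r • x) - ∑ l ∈ Finset.range k, (((h i).comp (pert i)) ^ l) (r • x))
            - r • (Xf i x - ∑ l ∈ Finset.range k, (((h i).comp (pert i)) ^ l) x) := by
        simp only [map_smul, smul_sub, Finset.smul_sum]
        abel
      rw [e]
      exact sub_mem (hK3 k (by omega)) (Submodule.smul_mem _ _ (hK1 k (by omega)))
    exact ⟨fun i => ⟨⟨Xf i, hadd i⟩, hsmul i⟩, hXf⟩
  -- X preserves the filtration
  have hXmem : ∀ (p : ℤ) i (x : Nc i), x ∈ F p i → X i x ∈ F p i := by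
    intro p i x hx
    obtain ⟨K, hK⟩ := hX i x p
    have h1 := hK K le_rfl
    have h2 := hSmem i p x hx K
    have e : X i x = (X i x - ∑ l ∈ Finset.range K, (((h i).comp (pert i)) ^ l) x)
        + ∑ l ∈ Finset.range K, (((h i).comp (pert i)) ^ l) x := by abel
    rw [e]; exact add_mem h1 h2
  -- shifted sums
  have sumShift : ∀ i (y : Nc i) (k : ℕ),
      (∑ l ∈ Finset.range k, (((h i).comp (pert i)) ^ l) (h i (pert i y)))
        = (∑ l ∈ Finset.range (k+1), (((h i).comp (pert i)) ^ l) y) - y := by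
    intro i y k
    rw [Finset.sum_range_succ']
    simp only [pow_succ, Module.End.mul_apply, pow_zero, Module.End.one_apply,
      LinearMap.comp_apply]
    abel
  -- the fixed point equations  X = 1 + X(h∂)  and  X = 1 + (h∂)X, pointwise
  have l1 : ∀ i (y : Nc i), X i (h i (pert i y)) = X i y - y := by
    intro i y
    apply approx_eq
    intro p
    obtain ⟨K1, hK1⟩ := hX i (h i (pert i y)) p
    obtain ⟨K2, hK2⟩ := hX i y p
    set k := max K1 K2
    have h1 := hK1 k (by omega)
    have h2 := hK2 (k+1) (by omega)
    have e : X i (h i (pert i y)) - (X i y - y)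
        = (X i (h i (pert i y))
            - ∑ l ∈ Finset.range k, (((h i).comp (pert i)) ^ l) (h i (pert i y)))
          - (X i y - ∑ l ∈ Finset.range (k+1), (((h i).comp (pert i)) ^ l) y) := by
      rw [sumShift]; abel
    rw [e]; exact sub_mem h1 h2
  have l2 : ∀ i (y : Nc i), h i (pert i (X i y)) = X i y - y := by
    intro i y
    apply approx_eq
    intro p
    obtain ⟨K1, hK1⟩ := hX i y p
    obtain ⟨K2, hK2⟩ := hX i y (p+1)
    set k := max K1 K2
    have h1 := hK1 (k+1) (by omega)
    have h2 := hK2 k (by omega)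
    have h3 : h i (pert i (X i y - ∑ l ∈ Finset.range k, (((h i).comp (pert i)) ^ l) y))
        ∈ F p i := by
      have := hlow (p+1) i _ h2
      have e0 : (p + 1 - 1 : ℤ) = p := by omega
      rw [e0] at this
      exact hhF p i _ this
    have e : h i (pert i (X i y)) - (X i y - y)
        = h i (pert i (X i y - ∑ l ∈ Finset.range k, (((h i).comp (pert i)) ^ l) y))
          - (X i y - ∑ l ∈ Finset.range (k+1), (((h i).comp (pert i)) ^ l) y) := by
      simp only [map_sub]
      rw [show h i (pert i (∑ l ∈ Finset.range k, (((h i).comp (pert i)) ^ l) y))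
          = ∑ l ∈ Finset.range k, (((h i).comp (pert i)) ^ l) (h i (pert i y)) from ?_,
        sumShift]
      · abel
      · rw [map_sum, map_sum]
        apply Finset.sum_congr rfl
        intro l _
        have : ∀ z : Nc i, h i (pert i ((((h i).comp (pert i)) ^ l) z))
            = (((h i).comp (pert i)) ^ l) (h i (pert i z)) := by
          intro z
          have e1 : h i (pert i ((((h i).comp (pert i)) ^ l) z))
              = (((h i).comp (pert i)) ^ (l+1)) z := by
            rw [pow_succ']; rfl
          have e2 : (((h i).comp (pert i)) ^ l) (h i (pert i z))
              = (((h i).comp (pert i)) ^ (l+1)) z := by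
            rw [pow_succ, Module.End.mul_apply]; rfl
          rw [e1, e2]
        exact this y
    rw [e]; exact sub_mem h3 h1
  have l3 : ∀ i (y : Nc i), σ i (X i y) = σ i y := by
    intro i y
    have e : X i y = y + h i (pert i (X i y)) := by rw [l2]; abel
    calc σ i (X i y) = σ i (y + h i (pert i (X i y))) := by rw [← e]
      _ = σ i y + σ i (h i (pert i (X i y))) := map_add _ _ _
      _ = σ i y := by rw [pσh]; abel
  have l4 : ∀ i (y : Nc (i+1)), h i (X (i+1) y) = h i y := by
    intro i y
    have e : X (i+1) y = y + h (i+1) (pert (i+1) (X (i+1) y)) := by rw [l2]; abel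
    calc h i (X (i+1) y) = h i (y + h (i+1) (pert (i+1) (X (i+1) y))) := by rw [← e]
      _ = h i y + h i (h (i+1) (pert (i+1) (X (i+1) y))) := map_add _ _ _
      _ = h i y := by rw [phh]; abel
  -- the four perturbed operators
  let ϑmap : ∀ i, Mc i →ₗ[R] Mc (i+1) :=
    fun i => (σ (i+1)).comp ((pert i).comp ((X i).comp (τ i)))
  have ϑapp : ∀ i (x : Mc i), ϑmap i x = σ (i+1) (pert i (X i (τ i x))) := fun _ _ => rfl
  let τ'map : ∀ i, Mc i →ₗ[R] Nc i := fun i => (X i).comp (τ i)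
  have τ'app : ∀ i (x : Mc i), τ'map i x = X i (τ i x) := fun _ _ => rfl
  let h'map : ∀ i, Nc (i+1) →ₗ[R] Nc i := fun i => (X i).comp (h i)
  have h'app : ∀ i (x : Nc (i+1)), h'map i x = X i (h i x) := fun _ _ => rfl
  let σaux : ∀ a : ℤ, Nc (a+1) →ₗ[R] Mc (a+1) :=
    fun a => σ (a+1) + (σ (a+1)).comp ((pert a).comp ((X a).comp (h a)))
  have σauxapp : ∀ a (x : Nc (a+1)),
      σaux a x = σ (a+1) x + σ (a+1) (pert a (X a (h a x))) := fun _ _ => rfl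
  let σ'map : ∀ j : ℤ, Nc j →ₗ[R] Mc j :=
    fun j => (show j - 1 + 1 = j by omega) ▸ σaux (j-1)
  have castfact : ∀ (fm : ∀ c : ℤ, Nc (c+1) →ₗ[R] Mc (c+1)) (a b : ℤ) (e : a = b)
      (e2 : a + 1 = b + 1), (e2 ▸ fm a : Nc (b+1) →ₗ[R] Mc (b+1)) = fm b := by
    intro fm a b e; subst e; intro e2; rfl
  have σ'succ : ∀ i : ℤ, σ'map (i+1) = σaux i := by
    intro i
    show (show (i+1) - 1 + 1 = i+1 by omega) ▸ σaux ((i+1)-1) = σaux i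
    exact castfact σaux _ _ (by omega) _
  -- the algebraic contraction identities
  have mainστ : ∀ b : ℤ, (σaux b).comp (τ'map (b+1)) = LinearMap.id := by
    intro b; apply LinearMap.ext; intro x
    simp only [σauxapp, τ'app, LinearMap.comp_apply, LinearMap.id_apply, l3, l4,
      pστ, phτ, map_zero, add_zero]
  have mainσh : ∀ b : ℤ, (σaux b).comp (h'map (b+1)) = 0 := by
    intro b; apply LinearMap.ext; intro x
    simp only [σauxapp, h'app, LinearMap.comp_apply, LinearMap.zero_apply, l3, l4,
      pσh, phh, map_zero, add_zero]
  have mainhτ : ∀ i : ℤ, (h'map i).comp (τ'map (i+1)) = 0 := by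
    intro i; apply LinearMap.ext; intro x
    simp only [h'app, τ'app, LinearMap.comp_apply, LinearMap.zero_apply, l4, phτ,
      map_zero]
  have mainhh : ∀ i : ℤ, (h'map i).comp (h'map (i+1)) = 0 := by
    intro i; apply LinearMap.ext; intro x
    simp only [h'app, LinearMap.comp_apply, LinearMap.zero_apply, l4, phh, map_zero]
  have mainA : ∀ i : ℤ, (τ'map (i+1)).comp (σaux i) - LinearMap.id =
      (h'map (i+1)).comp (δ (i+1) + pert (i+1)) + (δ i + pert i).comp (h'map i) := by
    intro i; apply LinearMap.ext; intro x
    simp only [σauxapp, τ'app, h'app, ϑapp, LinearMap.comp_apply, LinearMap.add_apply,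
      LinearMap.sub_apply, LinearMap.id_apply, map_add, map_sub, map_neg, map_zero,
      l1, l2, l3, l4, pστ, pτσ, pσh, phτ, phh, pδδ, pdσ, pτd, pdp, add_zero, zero_add]
    abel
  have mainB : ∀ b : ℤ, (σaux (b+1)).comp (δ (b+1) + pert (b+1)) =
      (d (b+1) + ϑmap (b+1)).comp (σaux b) := by
    intro b; apply LinearMap.ext; intro x
    simp only [σauxapp, τ'app, h'app, ϑapp, LinearMap.comp_apply, LinearMap.add_apply,
      LinearMap.sub_apply, LinearMap.id_apply, map_add, map_sub, map_neg, map_zero,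
      l1, l2, l3, l4, pστ, pτσ, pσh, phτ, phh, pδδ, pdσ, pτd, pdp, add_zero, zero_add]
    abel
  have mainC : ∀ i : ℤ, (δ i + pert i).comp (τ'map i) =
      (τ'map (i+1)).comp (d i + ϑmap i) := by
    intro i; apply LinearMap.ext; intro x
    simp only [σauxapp, τ'app, h'app, ϑapp, LinearMap.comp_apply, LinearMap.add_apply,
      LinearMap.sub_apply, LinearMap.id_apply, map_add, map_sub, map_neg, map_zero,
      l1, l2, l3, l4, pστ, pτσ, pσh, phτ, phh, pδδ, pdσ, pτd, pdp, add_zero, zero_add]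
    abel
  -- transported versions
  have H7 : ∀ i : ℤ, (σ'map (i+1)).comp (δ i + pert i) = (d i + ϑmap i).comp (σ'map i) := by
    intro i
    rw [σ'succ i, show i = i - 1 + 1 by omega, σ'succ (i-1)]
    exact mainB (i-1)
  have H9 : ∀ i : ℤ, (σ'map i).comp (τ'map i) = LinearMap.id := by
    intro i
    rw [show i = i - 1 + 1 by omega, σ'succ (i-1)]
    exact mainστ (i-1)
  have H10 : ∀ i : ℤ, (τ'map (i+1)).comp (σ'map (i+1)) - LinearMap.id =
      (h'map (i+1)).comp (δ (i+1) + pert (i+1)) + (δ i + pert i).comp (h'map i) := by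
    intro i; rw [σ'succ i]; exact mainA i
  have H11 : ∀ i : ℤ, (σ'map i).comp (h'map i) = 0 := by
    intro i
    rw [show i = i - 1 + 1 by omega, σ'succ (i-1)]
    exact mainσh (i-1)
  -- ϑ is a perturbation of d
  have H5 : ∀ i : ℤ, (d (i+1) + ϑmap (i+1)).comp (d i + ϑmap i) = 0 := by
    intro i
    apply LinearMap.ext; intro x
    have e9 : σ'map i (τ'map i x) = x := by
      have := LinearMap.ext_iff.mp (H9 i) x; simpa using this
    have s1 : ∀ z : Nc i, σ'map (i+1) ((δ i + pert i) z) = (d i + ϑmap i) (σ'map i z) := by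
      intro z; have := LinearMap.ext_iff.mp (H7 i) z; simpa using this
    have s2 : ∀ z : Nc (i+1), σ'map (i+1+1) ((δ (i+1) + pert (i+1)) z)
        = (d (i+1) + ϑmap (i+1)) (σ'map (i+1) z) := by
      intro z; have := LinearMap.ext_iff.mp (H7 (i+1)) z; simpa using this
    have hz : (δ (i+1) + pert (i+1)) ((δ i + pert i) (τ'map i x)) = 0 := by
      have := LinearMap.ext_iff.mp (hpert i) (τ'map i x); simpa using this
    simp only [LinearMap.comp_apply, LinearMap.zero_apply]
    rw [← e9, ← s1, ← s2, hz, map_zero]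
  have H6 : ∀ (p i : ℤ), ∀ x ∈ G p i, ϑmap i x ∈ G (p-1) (i+1) := by
    intro p i x hx
    rw [ϑapp]
    exact hσF _ _ _ (hlow p i _ (hXmem p i _ (hτG p i x hx)))
  -- filtration preservation
  have H14 : ∀ (p j : ℤ), ∀ x ∈ F p j, σ'map j x ∈ G p j := by
    intro p j
    rw [show j = j - 1 + 1 by omega, σ'succ (j-1)]
    intro x hx
    rw [σauxapp]
    refine Submodule.add_mem _ (hσF p _ x hx) ?_
    have h1 : h (j-1) x ∈ F p (j-1) := hhF p _ x hx
    have h4 := hσF (p-1) _ _ (hlow p _ _ (hXmem p _ _ h1))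
    exact Gmono _ (p-1) p (by omega) h4
  have H15 : ∀ (p i : ℤ), ∀ x ∈ G p i, τ'map i x ∈ F p i := by
    intro p i x hx
    rw [τ'app]
    exact hXmem p i _ (hτG p i x hx)
  have H16 : ∀ (p i : ℤ), ∀ x ∈ F p (i+1), h'map i x ∈ F p i := by
    intro p i x hx
    rw [h'app]
    exact hXmem p i _ (hhF p i x hx)
  -- convergence of the series
  have H1 : ∀ i (x : Mc i) (p : ℤ), ∃ K : ℕ, ∀ k ≥ K,
      ϑmap i x - ∑ l ∈ Finset.range k,
        (σ (i+1)) ((pert i) ((((h i).comp (pert i)) ^ l) ((τ i) x))) ∈ G p (i+1) := by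
    intro i x p
    obtain ⟨K, hK⟩ := hX i (τ i x) (p+1)
    refine ⟨K, fun k hk => ?_⟩
    have h2 := hlow (p+1) i _ (hK k hk)
    rw [show (p+1-1 : ℤ) = p by omega] at h2
    have h3 := hσF p (i+1) _ h2
    have e : ϑmap i x - ∑ l ∈ Finset.range k,
        (σ (i+1)) ((pert i) ((((h i).comp (pert i)) ^ l) ((τ i) x)))
        = σ (i+1) (pert i (X i (τ i x)
            - ∑ l ∈ Finset.range k, (((h i).comp (pert i)) ^ l) (τ i x))) := by
      simp only [ϑapp, map_sub, map_sum]
    rw [e]; exact h3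
  have hBpow : ∀ i (l : ℕ) (x : Nc (i+1)), (((pert i).comp (h i)) ^ (l+1)) x
      = pert i ((((h i).comp (pert i)) ^ l) (h i x)) := by
    intro i l
    induction l with
    | zero => intro x; simp only [pow_one, pow_zero, Module.End.one_apply]; rfl
    | succ l ih =>
      intro x
      rw [pow_succ', Module.End.mul_apply, ih, pow_succ' ((h i).comp (pert i)),
        Module.End.mul_apply]
      rfl
  have H2 : ∀ i (x : Nc (i+1)) (p : ℤ), ∃ K : ℕ, ∀ k ≥ K,
      σ'map (i+1) x - ∑ l ∈ Finset.range k,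
        (σ (i+1)) ((((pert i).comp (h i)) ^ l) x) ∈ G p (i+1) := by
    intro i x p
    obtain ⟨K, hK⟩ := hX i (h i x) (p+1)
    refine ⟨K+1, fun k hk => ?_⟩
    obtain ⟨m, rfl⟩ : ∃ m, k = m + 1 := ⟨k - 1, by omega⟩
    have h2 := hlow (p+1) i _ (hK m (by omega))
    rw [show (p+1-1 : ℤ) = p by omega] at h2
    have h3 := hσF p (i+1) _ h2
    have e : σ'map (i+1) x - ∑ l ∈ Finset.range (m+1),
        (σ (i+1)) ((((pert i).comp (h i)) ^ l) x)
        = σ (i+1) (pert i (X i (h i x)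
            - ∑ l ∈ Finset.range m, (((h i).comp (pert i)) ^ l) (h i x))) := by
      rw [σ'succ, σauxapp, Finset.sum_range_succ']
      simp only [hBpow, pow_zero, Module.End.one_apply, map_sub, map_sum]
      abel
    rw [e]; exact h3
  have H3 : ∀ i (x : Mc i) (p : ℤ), ∃ K : ℕ, ∀ k ≥ K,
      τ'map i x - ∑ l ∈ Finset.range k,
        (((h i).comp (pert i)) ^ l) ((τ i) x) ∈ F p i := by
    intro i x p
    exact hX i (τ i x) p
  have H4 : ∀ i (x : Nc (i+1)) (p : ℤ), ∃ K : ℕ, ∀ k ≥ K,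
      h'map i x - ∑ l ∈ Finset.range k,
        (((h i).comp (pert i)) ^ l) ((h i) x) ∈ F p i := by
    intro i x p
    exact hX i (h i x) p
  exact ⟨ϑmap, σ'map, τ'map, h'map, H1, H2, H3, H4, H5, H6, H7, mainC, H9, H10,
    H11, mainhτ, mainhh, H14, H15, H16⟩
end
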